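/- arXiv:0806.2788 — 2 statements merged into one kernel-verified Lean document; each statement's English description precedes it below -/
import Mathlib

section
/- Every treeable countable Borel equivalence relation decomposes as a free product of an at most countable family of finite Borel subrelations. In particular, every hyperfinite countable Borel equivalence relation is a free product of finite Borel equivalence relations. -/
/-!
Colour the edge `a ↦ φᵢ a` of a treeing by `i`, the first bit `n` at which the codes of `a` and
`φᵢ a` under a Borel injection `X → (ℕ → Bool)` differ, and the bit of `a` there. Each colour class
is a matching, hence a finite Borel subrelation, and these generate `R`. A cycle through the colour
classes is a word in the treeing, so it backtracks, crossing one edge twice: two consecutive steps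
have the same colour.

If `R = ⋃ₙ Sₙ` is hyperfinite, each finite `Sₙ` has a Borel transversal `Dₙ` (the least points of
the classes for a Borel order; Borel by Novikov's separation theorem and the Lusin–Novikov theorem
for finite sections), and `R` is the free product of `S₀` and the restrictions of `Sₙ₊₁` to `Dₙ`:
in a reduced cycle, the stretches between two steps of the top index stay in one class of the
previous level and so join two points of its transversal.
-/

open MeasureTheory

/-- A countable Borel equivalence relation on `X`, defined on a Borel domain `dom`:
it is Borel as a subset of `X × X`, is an equivalence relation on `dom`, and has
countable classes. -/
structure CBER (X : Type) [MeasurableSpace X] where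
  dom : Set X
  dom_meas : MeasurableSet dom
  rel : X → X → Prop
  rel_meas : MeasurableSet {p : X × X | rel p.1 p.2}
  rel_dom : ∀ {x y : X}, rel x y → x ∈ dom ∧ y ∈ dom
  refl : ∀ x ∈ dom, rel x x
  symm : ∀ {x y : X}, rel x y → rel y x
  trans : ∀ {x y z : X}, rel x y → rel y z → rel x z
  countable_classes : ∀ x : X, {y | rel x y}.Countable

/-- The class of `x`. -/
def CBER.cls {X : Type} [MeasurableSpace X] (R : CBER X) (x : X) : Set X := {y | R.rel x y}

/-- The `R`-saturation of a set `A`: the union of the `R`-classes meeting `A`. -/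
def CBER.sat {X : Type} [MeasurableSpace X] (R : CBER X) (A : Set X) : Set X :=
  {y | ∃ x ∈ A, R.rel x y}

/-- A complete section: a Borel subset of the domain meeting every class. -/
def CBER.IsCompleteSection {X : Type} [MeasurableSpace X] (R : CBER X) (A : Set X) : Prop :=
  MeasurableSet A ∧ A ⊆ R.dom ∧ ∀ x ∈ R.dom, ∃ y ∈ A, R.rel x y

/-- A smooth CBER: one admitting a Borel fundamental domain (a Borel set meeting
every class exactly once). -/
def CBER.Smooth {X : Type} [MeasurableSpace X] (R : CBER X) : Prop :=
  ∃ D : Set X, MeasurableSet D ∧ D ⊆ R.dom ∧ ∀ x ∈ R.dom, ∃! y, y ∈ D ∧ R.rel x y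

/-- Smoothness of the restriction `R|A`. -/
def CBER.SmoothOn {X : Type} [MeasurableSpace X] (R : CBER X) (A : Set X) : Prop :=
  ∃ D : Set X, MeasurableSet D ∧ D ⊆ A ∧ ∀ x ∈ R.dom ∩ A, ∃! y, y ∈ D ∧ R.rel x y

/-- All classes are finite. -/
def CBER.FiniteClasses {X : Type} [MeasurableSpace X] (R : CBER X) : Prop :=
  ∀ x ∈ R.dom, (R.cls x).Finite

/-- Aperiodic: all classes are infinite (on the domain). -/
def CBER.Aperiodic {X : Type} [MeasurableSpace X] (R : CBER X) : Prop :=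
  ∀ x ∈ R.dom, (R.cls x).Infinite

/-- Trivial: all classes are singletons. -/
def CBER.TrivialClasses {X : Type} [MeasurableSpace X] (R : CBER X) : Prop :=
  ∀ x y, R.rel x y → x = y

/-- The restriction `R|U` of `R` to a Borel set `U`. -/
def CBER.restrict {X : Type} [MeasurableSpace X] (R : CBER X) (U : Set X)
    (hU : MeasurableSet U) : CBER X where
  dom := R.dom ∩ U
  dom_meas := R.dom_meas.inter hU
  rel x y := R.rel x y ∧ x ∈ U ∧ y ∈ U
  rel_meas := by
    have h : {p : X × X | R.rel p.1 p.2 ∧ p.1 ∈ U ∧ p.2 ∈ U} =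
        {p : X × X | R.rel p.1 p.2} ∩ (Prod.fst ⁻¹' U ∩ Prod.snd ⁻¹' U) := by
      ext p
      simp only [Set.mem_setOf_eq, Set.mem_inter_iff, Set.mem_preimage, and_assoc]
    rw [h]
    exact R.rel_meas.inter ((measurable_fst hU).inter (measurable_snd hU))
  rel_dom := fun h => ⟨⟨(R.rel_dom h.1).1, h.2.1⟩, ⟨(R.rel_dom h.1).2, h.2.2⟩⟩
  refl := fun x hx => ⟨R.refl x hx.1, hx.2, hx.2⟩
  symm := fun h => ⟨R.symm h.1, h.2.2, h.2.1⟩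
  trans := fun h h' => ⟨R.trans h.1 h'.1, h.2.1, h'.2.2⟩
  countable_classes := fun x =>
    Set.Countable.mono (fun y hy => hy.1) (R.countable_classes x)

/-- `S` is a subrelation of `R`. -/
def CBER.IsSubrelOf {X : Type} [MeasurableSpace X] (S R : CBER X) : Prop :=
  S.dom ⊆ R.dom ∧ ∀ x y, S.rel x y → R.rel x y

/-- A partial Borel isomorphism between Borel subsets `src` and `tgt` of `X`. -/
structure PBI (X : Type) [MeasurableSpace X] where
  src : Set X
  tgt : Set X
  src_meas : MeasurableSet src
  tgt_meas : MeasurableSet tgt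
  toFun : X → X
  invFun : X → X
  meas_toFun : Measurable toFun
  meas_invFun : Measurable invFun
  mapsTo : Set.MapsTo toFun src tgt
  mapsTo_inv : Set.MapsTo invFun tgt src
  left_inv : ∀ x ∈ src, invFun (toFun x) = x
  right_inv : ∀ y ∈ tgt, toFun (invFun y) = y

/-- Membership in the full pseudogroup `[[R]]`: a partial Borel isomorphism whose
graph is contained in `R`. -/
def CBER.InPseudogroup {X : Type} [MeasurableSpace X] (R : CBER X) (φ : PBI X) : Prop :=
  φ.src ⊆ R.dom ∧ ∀ x ∈ φ.src, R.rel x (φ.toFun x)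

/-- Two subrelations `S₁`, `S₂` of `R` are inner conjugate in `R` if some element of the
full pseudogroup of `R` with domain `D(S₂)` and target `D(S₁)` conjugates one to the other. -/
def InnerConjugate {X : Type} [MeasurableSpace X] (R S₁ S₂ : CBER X) : Prop :=
  ∃ φ : PBI X, R.InPseudogroup φ ∧ φ.src = S₂.dom ∧ φ.tgt = S₁.dom ∧
    ∀ x ∈ φ.src, ∀ y ∈ φ.src, (S₂.rel x y ↔ S₁.rel (φ.toFun x) (φ.toFun y))

/-- `R` preserves the measure `μ`: every element of its full pseudogroup preserves `μ`. -/
def CBER.IsPMP {X : Type} [MeasurableSpace X] (R : CBER X) (μ : Measure X) : Prop :=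
  ∀ φ : PBI X, R.InPseudogroup φ → ∀ A : Set X, A ⊆ φ.src → MeasurableSet A →
    μ (φ.toFun '' A) = μ A

/-- Free independence of a family of equivalence relations: any cycle alternating
nontrivially among the factors must have two consecutive steps in the same factor. -/
def FreelyIndep {X : Type} [MeasurableSpace X] {ι : Type} (Rf : ι → CBER X) : Prop :=
  ∀ (n : ℕ) (x : ℕ → X) (i : ℕ → ι), 2 ≤ n → x n = x 0 →
    (∀ j < n, x j ≠ x (j + 1)) → (∀ j < n, (Rf (i j)).rel (x j) (x (j + 1))) →
    ∃ j, j + 1 < n ∧ i j = i (j + 1)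

/-- `R` is the free product of the family `Rf`: the family is freely independent and `R`
is the smallest equivalence relation on the union of the domains containing every `Rf i`. -/
def IsFreeProduct {X : Type} [MeasurableSpace X] {ι : Type} (R : CBER X)
    (Rf : ι → CBER X) : Prop :=
  FreelyIndep Rf ∧ R.dom = (⋃ i, (Rf i).dom) ∧
    ∀ x y, R.rel x y ↔
      (x ∈ R.dom ∧ Relation.EqvGen (fun a b => ∃ i, (Rf i).rel a b) x y)

/-- The partition `U = ⊔ⱼ Uⱼ` trivializes the free product decomposition `R = *ⱼ Rf j`:
`U` is a complete section for `R`, the partition is `R|U`-invariant, and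
`R|Uⱼ = (Rf j)|Uⱼ` for every `j`. -/
def Trivializes {X : Type} [MeasurableSpace X] {ι : Type}
    (R : CBER X) (Rf : ι → CBER X) (U : ι → Set X) : Prop :=
  (∀ j, MeasurableSet (U j)) ∧ (∀ j, U j ⊆ R.dom) ∧
  Pairwise (Function.onFun Disjoint U) ∧
  (∀ x ∈ R.dom, ∃ y ∈ ⋃ j, U j, R.rel x y) ∧
  (∀ i j : ι, ∀ x ∈ U i, ∀ y ∈ U j, R.rel x y → i = j) ∧
  (∀ j, ∀ x ∈ U j, ∀ y ∈ U j, (R.rel x y ↔ (Rf j).rel x y))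

/-- A free product decomposition is inessential if it admits a trivialization. -/
def Inessential {X : Type} [MeasurableSpace X] {ι : Type}
    (R : CBER X) (Rf : ι → CBER X) : Prop :=
  ∃ U : ι → Set X, Trivializes R Rf U

/-- Freely indecomposable (Borel context): every free product decomposition is inessential. -/
def FreelyIndecomposable {X : Type} [MeasurableSpace X] (R : CBER X) : Prop :=
  ∀ (ι : Type) (_ : Countable ι) (Rf : ι → CBER X), IsFreeProduct R Rf → Inessential R Rf

/-- Inessential decomposition in the measured context: a trivialization up to `μ`-null sets. -/
def InessentialMod {X : Type} [MeasurableSpace X] (μ : Measure X) {ι : Type}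
    (R : CBER X) (Rf : ι → CBER X) : Prop :=
  ∃ (U : ι → Set X) (C : Set X),
    (∀ j, MeasurableSet (U j)) ∧ (∀ j, U j ⊆ R.dom) ∧
    Pairwise (Function.onFun Disjoint U) ∧
    MeasurableSet C ∧ μ Cᶜ = 0 ∧
    (∀ x ∈ R.dom ∩ C, ∃ y ∈ ⋃ j, U j, R.rel x y) ∧
    (∀ i j : ι, ∀ x ∈ U i ∩ C, ∀ y ∈ U j ∩ C, R.rel x y → i = j) ∧
    (∀ j, ∀ x ∈ U j ∩ C, ∀ y ∈ U j ∩ C, (R.rel x y ↔ (Rf j).rel x y))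

/-- Freely indecomposable (measured context): every free product decomposition is
inessential up to `μ`-null sets. -/
def FreelyIndecomposableMod {X : Type} [MeasurableSpace X] (μ : Measure X)
    (R : CBER X) : Prop :=
  ∀ (ι : Type) (_ : Countable ι) (Rf : ι → CBER X), IsFreeProduct R Rf →
    InessentialMod μ R Rf

/-- One step of a word in a graphing: apply `φ` (if `e = true`) or `φ⁻¹` (if `e = false`). -/
def PBIStep {X : Type} [MeasurableSpace X] (φ : PBI X) : Bool → X → X → Prop
  | true, a, b => a ∈ φ.src ∧ φ.toFun a = b
  | false, a, b => a ∈ φ.tgt ∧ φ.invFun a = b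

/-- A treeing: any cyclic word in the generators and their inverses admits a reduction. -/
def IsTreeing {X : Type} [MeasurableSpace X] {ι : Type} (Φ : ι → PBI X) : Prop :=
  ∀ (n : ℕ) (i : ℕ → ι) (ε : ℕ → Bool) (x : ℕ → X),
    0 < n → x n = x 0 → (∀ j < n, PBIStep (Φ (i j)) (ε j) (x j) (x (j + 1))) →
    ∃ j, j + 1 < n ∧ i j = i (j + 1) ∧ ε j ≠ ε (j + 1)

/-- The graphing `Φ` generates `R`: `R` is the smallest equivalence relation on the union of
the sources and targets containing the graphs of the `Φ i`. -/
def GeneratesCBER {X : Type} [MeasurableSpace X] {ι : Type} (Φ : ι → PBI X)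
    (R : CBER X) : Prop :=
  R.dom = (⋃ i, ((Φ i).src ∪ (Φ i).tgt)) ∧ (∀ i, R.InPseudogroup (Φ i)) ∧
    ∀ x y, R.rel x y ↔ (x ∈ R.dom ∧
      Relation.EqvGen (fun a b => ∃ i, a ∈ (Φ i).src ∧ (Φ i).toFun a = b) x y)

/-- Treeable: generated by some (countable) treeing. -/
def CBER.Treeable {X : Type} [MeasurableSpace X] (R : CBER X) : Prop :=
  ∃ Φ : ℕ → PBI X, IsTreeing Φ ∧ GeneratesCBER Φ R

/-- Hyperfinite: increasing union of finite Borel subrelations. -/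
def CBER.Hyperfinite {X : Type} [MeasurableSpace X] (R : CBER X) : Prop :=
  ∃ S : ℕ → CBER X, (∀ n, (S n).IsSubrelOf R) ∧ (∀ n, (S n).FiniteClasses) ∧
    (∀ n, (S n).dom = R.dom) ∧ (∀ n, ∀ x y, (S n).rel x y → (S (n + 1)).rel x y) ∧
    ∀ x y, R.rel x y → ∃ n, (S n).rel x y

/-- Ergodicity of a measured CBER: every invariant Borel set is null or conull. -/
def ErgodicCBER {X : Type} [MeasurableSpace X] (R : CBER X) (μ : Measure X) : Prop :=
  ∀ A : Set X, MeasurableSet A → (∀ x ∈ A, ∀ y, R.rel x y → y ∈ A) →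
    μ A = 0 ∨ μ Aᶜ = 0

/-- A stable orbit equivalence between measured CBERs: a Borel isomorphism between
complete sections (mod null sets), sending the normalized measure to the normalized
measure, and preserving the relations a.e. -/
structure SOEquiv {X Y : Type} [MeasurableSpace X] [MeasurableSpace Y]
    (R : CBER X) (μ : Measure X) (S : CBER Y) (ν : Measure Y) where
  A : Set X
  B : Set Y
  toFun : X → Y
  invFun : Y → X
  measA : MeasurableSet A
  measB : MeasurableSet B
  A_sub : A ⊆ R.dom
  B_sub : B ⊆ S.dom
  A_pos : 0 < μ A
  B_pos : 0 < ν B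
  A_section : ∀ᵐ x ∂μ, x ∈ R.dom → ∃ y ∈ A, R.rel x y
  B_section : ∀ᵐ y ∂ν, y ∈ S.dom → ∃ z ∈ B, S.rel y z
  meas_toFun : Measurable toFun
  meas_invFun : Measurable invFun
  mapsTo : Set.MapsTo toFun A B
  mapsTo_inv : Set.MapsTo invFun B A
  left_inv : ∀ x ∈ A, invFun (toFun x) = x
  right_inv : ∀ y ∈ B, toFun (invFun y) = y
  measure_eq : ∀ E : Set X, E ⊆ A → MeasurableSet E →
    (μ A)⁻¹ * μ E = (ν B)⁻¹ * ν (toFun '' E)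
  rel_iff : ∃ C : Set X, MeasurableSet C ∧ μ (A \ C) = 0 ∧
    ∀ x ∈ A ∩ C, ∀ y ∈ A ∩ C, (R.rel x y ↔ S.rel (toFun x) (toFun y))

/-- Stable orbit equivalence. -/
def SOE {X Y : Type} [MeasurableSpace X] [MeasurableSpace Y]
    (R : CBER X) (μ : Measure X) (S : CBER Y) (ν : Measure Y) : Prop :=
  Nonempty (SOEquiv R μ S ν)

/-- Orbit equivalence: a stable orbit equivalence where one can take the complete
sections to be the full spaces. -/
def OE {X Y : Type} [MeasurableSpace X] [MeasurableSpace Y]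
    (R : CBER X) (μ : Measure X) (S : CBER Y) (ν : Measure Y) : Prop :=
  ∃ E : SOEquiv R μ S ν, E.A = Set.univ ∧ E.B = Set.univ

/-- A probability measure preserving action of a group `G` on a measured space. -/
structure PMPAction (G : Type) [Group G] (X : Type) [MeasurableSpace X]
    (μ : Measure X) where
  act : G → X → X
  act_one : ∀ x, act 1 x = x
  act_mul : ∀ g h x, act (g * h) x = act g (act h x)
  measurePreserving : ∀ g, MeasurePreserving (act g) μ μ

/-- Essential freeness: a.e. point has trivial stabilizer. -/
def PMPAction.IsFree {G X : Type} [Group G] [MeasurableSpace X] {μ : Measure X}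
    (α : PMPAction G X μ) : Prop :=
  ∀ᵐ x ∂μ, ∀ g : G, α.act g x = x → g = 1

/-- `R` is the orbit equivalence relation of the action `α` restricted to the subgroup `H`. -/
def IsOrbitRel {G X : Type} [Group G] [MeasurableSpace X] {μ : Measure X}
    (α : PMPAction G X μ) (H : Subgroup G) (R : CBER X) : Prop :=
  R.dom = Set.univ ∧ ∀ x y, (R.rel x y ↔ ∃ g ∈ H, α.act g x = y)

/-- A countable group is measurably freely indecomposable (MFI) if the orbit equivalence
relation of every free p.m.p. action of it on a standard probability space is freely
indecomposable. -/
def MFI (G : Type) [Group G] [Countable G] : Prop :=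
  ∀ (X : Type) [MeasurableSpace X] [StandardBorelSpace X]
    (μ : Measure X) [IsProbabilityMeasure μ]
    (α : PMPAction G X μ) (R : CBER X),
    α.IsFree → IsOrbitRel α ⊤ R → FreelyIndecomposableMod μ R

/-- `G` is the internal free product of the family of subgroups `H`. -/
def IsFreeProductOf (G : Type) [Group G] {ι : Type} (H : ι → Subgroup G) : Prop :=
  Function.Bijective (Monoid.CoprodI.lift fun i => (H i).subtype)

/-- A Borel fundamental domain for an action, of the coupling kind: meets a.e. orbit,
and meets each orbit at most once mod null. -/
def IsFundamentalDomainFor {G : Type} [Group G] {Ω : Type} [MeasurableSpace Ω]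
    (ν : Measure Ω) (a : G → Ω → Ω) (D : Set Ω) : Prop :=
  MeasurableSet D ∧ (∀ᵐ x ∂ν, ∃ g : G, a g x ∈ D) ∧
    ∀ g : G, g ≠ 1 → ν (D ∩ a g ⁻¹' D) = 0

/-- A measure equivalence coupling between `G` and `H`: a standard σ-finite measure space
with commuting measure-preserving essentially free actions of `G` and `H`, each admitting
a Borel fundamental domain of finite positive measure. -/
structure MECoupling (G : Type) [Group G] (H : Type) [Group H] where
  (Ω : Type)
  [mΩ : MeasurableSpace Ω]
  [sbΩ : StandardBorelSpace Ω]
  (ν : Measure Ω)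
  sigmaFinite : SigmaFinite ν
  aG : G → Ω → Ω
  aH : H → Ω → Ω
  DG : Set Ω
  DH : Set Ω
  aG_one : ∀ x, aG 1 x = x
  aG_mul : ∀ g g' x, aG (g * g') x = aG g (aG g' x)
  aH_one : ∀ x, aH 1 x = x
  aH_mul : ∀ h h' x, aH (h * h') x = aH h (aH h' x)
  comm : ∀ g h x, aG g (aH h x) = aH h (aG g x)
  mp_aG : ∀ g, MeasurePreserving (aG g) ν ν
  mp_aH : ∀ h, MeasurePreserving (aH h) ν ν
  free_aG : ∀ᵐ x ∂ν, ∀ g, aG g x = x → g = 1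
  free_aH : ∀ᵐ x ∂ν, ∀ h, aH h x = x → h = 1
  fund_DG : IsFundamentalDomainFor ν aG DG
  fund_DH : IsFundamentalDomainFor ν aH DH
  DG_pos : 0 < ν DG
  DG_fin : ν DG < ⊤
  DH_pos : 0 < ν DH
  DH_fin : ν DH < ⊤

/-- The generalized index (compression constant) of a measure equivalence coupling. -/
noncomputable def MECoupling.index {G : Type} [Group G] {H : Type} [Group H]
    (c : MECoupling G H) : ENNReal :=
  c.ν c.DH / c.ν c.DG

/-- Measure equivalence of countable groups. -/
def MeasureEquivalent (G : Type) [Group G] (H : Type) [Group H] : Prop :=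
  Nonempty (MECoupling G H)

/-- Measure equivalence with a prescribed generalized index. -/
def MEwithIndex (G : Type) [Group G] (H : Type) [Group H] (κ : ENNReal) : Prop :=
  ∃ c : MECoupling G H, c.index = κ

namespace CBER

variable {X : Type} [MeasurableSpace X]

theorem finite_cls {S : CBER X} (hS : S.FiniteClasses) (x : X) : (S.cls x).Finite := by
  by_cases hx : x ∈ S.dom
  · exact hS x hx
  · convert Set.finite_empty
    exact Set.eq_empty_of_forall_notMem fun y hy => hx (S.rel_dom hy).1

theorem IsSubrelOf.trans {S T R : CBER X} (hST : S.IsSubrelOf T) (hTR : T.IsSubrelOf R) :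
    S.IsSubrelOf R :=
  ⟨hST.1.trans hTR.1, fun x y h => hTR.2 x y (hST.2 x y h)⟩

theorem IsSubrelOf.finiteClasses {S T : CBER X} (hST : S.IsSubrelOf T) (hT : T.FiniteClasses) :
    S.FiniteClasses :=
  fun x _ => (T.finite_cls hT x).subset fun y => hST.2 x y

theorem eq_or_rel_trans {R : CBER X} {u v w : X} (huv : u = v ∨ R.rel u v)
    (hvw : v = w ∨ R.rel v w) : u = w ∨ R.rel u w := by
  rcases huv with rfl | huv
  · exact hvw
  · rcases hvw with rfl | hvw
    exacts [Or.inr huv, Or.inr (R.trans huv hvw)]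

theorem rel_of_eqvGen {R : CBER X} {r : X → X → Prop} (hr : ∀ a b, r a b → R.rel a b)
    {x y : X} (hx : x ∈ R.dom) (h : Relation.EqvGen r x y) : R.rel x y := by
  have hequiv : Equivalence fun a b => a = b ∨ R.rel a b :=
    ⟨fun _ => Or.inl rfl, fun h => h.elim (fun h => Or.inl h.symm) fun h => Or.inr (R.symm h),
      eq_or_rel_trans⟩
  have hle : r ≤ fun a b => a = b ∨ R.rel a b := fun a b hab => Or.inr (hr a b hab)
  obtain rfl | hxy := hequiv.eqvGen_iff.1 (Relation.EqvGen.mono hle x y h)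
  exacts [R.refl x hx, hxy]

theorem isFreeProduct_of_isSubrelOf {ι : Type} {R : CBER X} {Rf : ι → CBER X}
    (hsub : ∀ i, (Rf i).IsSubrelOf R) (hindep : FreelyIndep Rf)
    (hdom : R.dom ⊆ ⋃ i, (Rf i).dom)
    (hgen : ∀ x y, R.rel x y → Relation.EqvGen (fun a b => ∃ i, (Rf i).rel a b) x y) :
    IsFreeProduct R Rf := by
  refine ⟨hindep, hdom.antisymm (Set.iUnion_subset fun i => (hsub i).1), fun x y => ?_⟩
  refine ⟨fun h => ⟨(R.rel_dom h).1, hgen x y h⟩, fun ⟨hx, h⟩ => ?_⟩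
  exact rel_of_eqvGen (fun a b ⟨i, hab⟩ => (hsub i).2 a b hab) hx h

end CBER

theorem measurableSet_eq_of_injective {X Y Z : Type*} [MeasurableSpace X] [MeasurableSpace Y]
    [MeasurableSpace Z] [MeasurableEq Z] {f : Y → Z} (hf : Measurable f)
    (hinj : Function.Injective f) {g h : X → Y} (hg : Measurable g) (hh : Measurable h) :
    MeasurableSet {x | g x = h x} := by
  simp_rw [← hinj.eq_iff]
  exact measurableSet_eq_fun (hf.comp hg) (hf.comp hh)

theorem PBI.mem_tgt_invFun {X : Type} [MeasurableSpace X] {φ : PBI X} {a b : X}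
    (ha : a ∈ φ.src) (hab : φ.toFun a = b) : b ∈ φ.tgt ∧ φ.invFun b = a :=
  ⟨hab ▸ φ.mapsTo ha, hab ▸ φ.left_inv a ha⟩

theorem IsTreeing.toFun_ne {X : Type} [MeasurableSpace X] {ι : Type} {Φ : ι → PBI X}
    (hΦ : IsTreeing Φ) {i : ι} {a : X} (ha : a ∈ (Φ i).src) : (Φ i).toFun a ≠ a := by
  intro h
  obtain ⟨j, hj, -⟩ := hΦ 1 (fun _ => i) (fun _ => true) (fun _ => a) one_pos rfl
    (fun _ _ => ⟨ha, h⟩)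
  omega

section LabelledEdge

variable {X : Type} [MeasurableSpace X] {ι : Type} (Φ : ι → PBI X) (f : X → ℕ → Bool)

/-- The edge `a ↦ b = (Φ i) a` gets the colour `(i, n, f a n)`, where `n` is the first bit at
which the codes `f a` and `f b` differ. Recording the bit of the source makes every colour class a
matching: no point is the source of one edge and the target of another of the same colour. -/
def LabelledEdge (c : ι × ℕ × Bool) (a b : X) : Prop :=
  a ∈ (Φ c.1).src ∧ (Φ c.1).toFun a = b ∧
    (∀ j < c.2.1, f a j = f b j) ∧ f a c.2.1 = c.2.2 ∧ f b c.2.1 ≠ c.2.2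

variable {Φ f} {c c' : ι × ℕ × Bool} {a a' b b' : X}

theorem LabelledEdge.mem_tgt (h : LabelledEdge Φ f c a b) :
    b ∈ (Φ c.1).tgt ∧ (Φ c.1).invFun b = a :=
  PBI.mem_tgt_invFun h.1 h.2.1

theorem LabelledEdge.eq_target (h : LabelledEdge Φ f c a b) (h' : LabelledEdge Φ f c' a b')
    (hc : c.1 = c'.1) : b = b' := by
  rw [← h.2.1, ← h'.2.1, hc]

theorem LabelledEdge.eq_source (h : LabelledEdge Φ f c a b) (h' : LabelledEdge Φ f c' a' b)
    (hc : c.1 = c'.1) : a = a' := by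
  have h'' := h'.mem_tgt.2
  rw [← hc] at h''
  rw [← h.mem_tgt.2, h'']

theorem LabelledEdge.not_of_source (h : LabelledEdge Φ f c a b) : ¬LabelledEdge Φ f c b' a :=
  fun h' => h'.2.2.2.2 h.2.2.2.1

theorem LabelledEdge.eq_of_fst_eq (h : LabelledEdge Φ f c a b) (h' : LabelledEdge Φ f c' a b)
    (hc : c.1 = c'.1) : c = c' := by
  have hn : c.2.1 = c'.2.1 := by
    by_contra hne
    rcases Nat.lt_or_gt_of_ne hne with hlt | hlt
    · exact h.2.2.2.2 (h.2.2.2.1 ▸ (h'.2.2.1 _ hlt).symm)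
    · exact h'.2.2.2.2 (h'.2.2.2.1 ▸ (h.2.2.1 _ hlt).symm)
  ext
  · exact hc
  · exact hn
  · rw [← h.2.2.2.1, ← h'.2.2.2.1, hn]

theorem exists_labelledEdge (hf : Function.Injective f) {i : ι} (ha : a ∈ (Φ i).src)
    (hne : (Φ i).toFun a ≠ a) : ∃ c, c.1 = i ∧ LabelledEdge Φ f c a ((Φ i).toFun a) := by
  classical
  have hdiff : ∃ n, f a n ≠ f ((Φ i).toFun a) n := by
    by_contra! h
    exact hne (hf (funext h)).symm
  refine ⟨(i, Nat.find hdiff, f a (Nat.find hdiff)), rfl, ha, rfl,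
    fun j hj => not_not.1 (Nat.find_min hdiff hj), rfl, fun h => Nat.find_spec hdiff h.symm⟩

theorem measurableSet_labelledEdge (hf : Measurable f) (hinj : Function.Injective f)
    (c : ι × ℕ × Bool) : MeasurableSet {p : X × X | LabelledEdge Φ f c p.1 p.2} := by
  have hbit : ∀ (g : X × X → X) (j : ℕ), Measurable g →
      Measurable fun p => f (g p) j := fun g j hg => (measurable_pi_apply j).comp (hf.comp hg)
  simp only [LabelledEdge, Set.ofPred_and, Set.ofPred_forall]
  refine (measurable_fst (Φ c.1).src_meas).inter <|
    (measurableSet_eq_of_injective hf hinj ((Φ c.1).meas_toFun.comp measurable_fst)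
      measurable_snd).inter <| (MeasurableSet.iInter fun j => MeasurableSet.iInter fun _ =>
      measurableSet_eq_fun (hbit _ j measurable_fst) (hbit _ j measurable_snd)).inter <|
      (measurableSet_eq_fun (hbit _ _ measurable_fst) measurable_const).inter ?_
  exact (measurableSet_eq_fun (hbit _ _ measurable_snd) measurable_const).compl

end LabelledEdge

section LabelledFactor

variable {X : Type} [MeasurableSpace X] {ι : Type} {Φ : ι → PBI X} {f : X → ℕ → Bool}
  {c : ι × ℕ × Bool} {a b : X}

def labelledDom (Φ : ι → PBI X) (f : X → ℕ → Bool) (c : ι × ℕ × Bool) : Set X :=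
  {a | ∃ b, LabelledEdge Φ f c a b ∨ LabelledEdge Φ f c b a}

def LabelledRel (Φ : ι → PBI X) (f : X → ℕ → Bool) (c : ι × ℕ × Bool) (a b : X) : Prop :=
  LabelledEdge Φ f c a b ∨ LabelledEdge Φ f c b a ∨ (a = b ∧ a ∈ labelledDom Φ f c)

theorem measurableSet_labelledDom (hf : Measurable f) (hinj : Function.Injective f)
    (c : ι × ℕ × Bool) : MeasurableSet (labelledDom Φ f c) := by
  have hdom : labelledDom Φ f c = (fun a => (a, (Φ c.1).toFun a)) ⁻¹'
      {p | LabelledEdge Φ f c p.1 p.2} ∪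
      ((Φ c.1).tgt ∩ (fun a => ((Φ c.1).invFun a, a)) ⁻¹' {p | LabelledEdge Φ f c p.1 p.2}) := by
    ext a
    constructor
    · rintro ⟨b, h | h⟩
      · exact Or.inl (show LabelledEdge Φ f c a ((Φ c.1).toFun a) by rwa [h.2.1])
      · obtain ⟨hb, rfl⟩ := h.mem_tgt
        exact Or.inr ⟨hb, h⟩
    · rintro (h | ⟨-, h⟩)
      exacts [⟨_, Or.inl h⟩, ⟨_, Or.inr h⟩]
  rw [hdom]
  have hE := measurableSet_labelledEdge (Φ := Φ) hf hinj c
  exact (measurable_id.prodMk (Φ c.1).meas_toFun hE).union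
    ((Φ c.1).tgt_meas.inter ((Φ c.1).meas_invFun.prodMk measurable_id hE))

theorem LabelledRel.mem_dom (h : LabelledRel Φ f c a b) :
    a ∈ labelledDom Φ f c ∧ b ∈ labelledDom Φ f c := by
  rcases h with h | h | ⟨rfl, ha⟩
  · exact ⟨⟨b, Or.inl h⟩, ⟨a, Or.inr h⟩⟩
  · exact ⟨⟨b, Or.inr h⟩, ⟨a, Or.inl h⟩⟩
  · exact ⟨ha, ha⟩

theorem LabelledRel.symm (h : LabelledRel Φ f c a b) : LabelledRel Φ f c b a := by
  rcases h with h | h | ⟨rfl, ha⟩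
  exacts [Or.inr (Or.inl h), Or.inl h, Or.inr (Or.inr ⟨rfl, ha⟩)]

theorem LabelledRel.trans {d : X} (h : LabelledRel Φ f c a b) (h' : LabelledRel Φ f c b d) :
    LabelledRel Φ f c a d := by
  rcases h' with h' | h' | ⟨rfl, -⟩
  · rcases h with h | h | ⟨rfl, -⟩
    · exact absurd h h'.not_of_source
    · exact Or.inr (Or.inr ⟨h.eq_target h' rfl, ⟨b, Or.inr h⟩⟩)
    · exact Or.inl h'
  · rcases h with h | h | ⟨rfl, -⟩
    · exact Or.inr (Or.inr ⟨h.eq_source h' rfl, ⟨b, Or.inl h⟩⟩)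
    · exact absurd h' h.not_of_source
    · exact Or.inr (Or.inl h')
  · exact h

theorem LabelledRel.subset_orbit (h : LabelledRel Φ f c a b) :
    b ∈ ({a, (Φ c.1).toFun a, (Φ c.1).invFun a} : Set X) := by
  rcases h with h | h | ⟨rfl, -⟩
  · exact Or.inr (Or.inl h.2.1.symm)
  · exact Or.inr (Or.inr h.mem_tgt.2.symm)
  · exact Or.inl rfl

def labelledFactor (Φ : ι → PBI X) (hf : Measurable f) (hinj : Function.Injective f)
    (c : ι × ℕ × Bool) : CBER X where
  dom := labelledDom Φ f c
  dom_meas := measurableSet_labelledDom hf hinj c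
  rel := LabelledRel Φ f c
  rel_meas := by
    have hE := measurableSet_labelledEdge (Φ := Φ) hf hinj c
    refine hE.union ((measurable_swap hE).union ?_)
    exact (measurableSet_eq_of_injective hf hinj measurable_fst measurable_snd).inter
      (measurable_fst (measurableSet_labelledDom hf hinj c))
  rel_dom := LabelledRel.mem_dom
  refl := fun a ha => Or.inr (Or.inr ⟨rfl, ha⟩)
  symm := LabelledRel.symm
  trans := LabelledRel.trans
  countable_classes _ := (Set.toFinite _).countable.mono fun _ => LabelledRel.subset_orbit

theorem labelledFactor_finiteClasses (hf : Measurable f) (hinj : Function.Injective f)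
    (c : ι × ℕ × Bool) : (labelledFactor Φ hf hinj c).FiniteClasses :=
  fun _ _ => (Set.toFinite _).subset fun _ => LabelledRel.subset_orbit

end LabelledFactor

section Treeable

variable {X : Type} [MeasurableSpace X] {ι : Type} {Φ : ι → PBI X} {f : X → ℕ → Bool}
  {R : CBER X} {c : ι × ℕ × Bool} {a b : X}

theorem LabelledEdge.rel (hG : GeneratesCBER Φ R) (h : LabelledEdge Φ f c a b) : R.rel a b :=
  h.2.1 ▸ (hG.2.1 c.1).2 a h.1

theorem mem_dom_of_mem_labelledDom (hG : GeneratesCBER Φ R) (ha : a ∈ labelledDom Φ f c) :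
    a ∈ R.dom := by
  obtain ⟨b, h | h⟩ := ha
  exacts [(R.rel_dom (h.rel hG)).1, (R.rel_dom (h.rel hG)).2]

theorem labelledFactor_isSubrelOf (hG : GeneratesCBER Φ R) (hf : Measurable f)
    (hinj : Function.Injective f) (c : ι × ℕ × Bool) :
    (labelledFactor Φ hf hinj c).IsSubrelOf R := by
  refine ⟨fun _ => mem_dom_of_mem_labelledDom hG, fun a b h => ?_⟩
  rcases h with h | h | ⟨rfl, ha⟩
  exacts [h.rel hG, R.symm (h.rel hG), R.refl a (mem_dom_of_mem_labelledDom hG ha)]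

/-- A cycle of coloured edges is a word in the treeing; its backtracking step runs twice
through the same edge, which therefore carries the same colour both times. -/
theorem freelyIndep_labelledFactor (hΦ : IsTreeing Φ) (hf : Measurable f)
    (hinj : Function.Injective f) : FreelyIndep (labelledFactor Φ hf hinj) := by
  classical
  intro n x c hn hxn hne hrel
  have hedge : ∀ j < n, LabelledEdge Φ f (c j) (x j) (x (j + 1)) ∨
      LabelledEdge Φ f (c j) (x (j + 1)) (x j) := fun j hj =>
    (hrel j hj).imp_right fun h => h.resolve_right fun h' => hne j hj h'.1
  set ε : ℕ → Bool := fun j => decide (LabelledEdge Φ f (c j) (x j) (x (j + 1))) with hε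
  have hstep : ∀ j < n, PBIStep (Φ (c j).1) (ε j) (x j) (x (j + 1)) := by
    intro j hj
    by_cases h : LabelledEdge Φ f (c j) (x j) (x (j + 1))
    · simp only [hε, h, decide_true]
      exact ⟨h.1, h.2.1⟩
    · simp only [hε, h, decide_false]
      exact ((hedge j hj).resolve_left h).mem_tgt
  obtain ⟨j, hj, hi, hεj⟩ := hΦ n (fun j => (c j).1) ε x (by omega) hxn hstep
  refine ⟨j, hj, ?_⟩
  by_cases h : LabelledEdge Φ f (c j) (x j) (x (j + 1))
  · have h' : LabelledEdge Φ f (c (j + 1)) (x (j + 1 + 1)) (x (j + 1)) :=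
      (hedge (j + 1) hj).resolve_left fun h' => hεj (by simp only [hε, h, h', decide_true])
    rw [← h.eq_source h' hi] at h'
    exact h.eq_of_fst_eq h' hi
  · have h₁ := (hedge j (by omega)).resolve_left h
    have h' : LabelledEdge Φ f (c (j + 1)) (x (j + 1)) (x (j + 1 + 1)) := by
      by_contra h'
      exact hεj (by simp only [hε, h, h', decide_false])
    rw [← h₁.eq_target h' hi] at h'
    exact h₁.eq_of_fst_eq h' hi

theorem subset_iUnion_labelledDom (hΦ : IsTreeing Φ) (hG : GeneratesCBER Φ R)
    (hinj : Function.Injective f) : R.dom ⊆ ⋃ c, labelledDom Φ f c := by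
  intro a ha
  rw [hG.1] at ha
  obtain ⟨i, hsrc | htgt⟩ := Set.mem_iUnion.1 ha
  · obtain ⟨c, -, h⟩ := exists_labelledEdge hinj hsrc (hΦ.toFun_ne hsrc)
    exact Set.mem_iUnion.2 ⟨c, _, Or.inl h⟩
  · have hb := (Φ i).mapsTo_inv htgt
    obtain ⟨c, -, h⟩ := exists_labelledEdge hinj hb (hΦ.toFun_ne hb)
    rw [(Φ i).right_inv a htgt] at h
    exact Set.mem_iUnion.2 ⟨c, _, Or.inr h⟩

theorem eqvGen_labelledFactor (hΦ : IsTreeing Φ) (hG : GeneratesCBER Φ R) (hf : Measurable f)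
    (hinj : Function.Injective f) {x y : X} (h : R.rel x y) :
    Relation.EqvGen (fun a b => ∃ c, (labelledFactor Φ hf hinj c).rel a b) x y := by
  refine Relation.EqvGen.mono ?_ x y ((hG.2.2 x y).1 h).2
  rintro a b ⟨i, ha, rfl⟩
  obtain ⟨c, -, h⟩ := exists_labelledEdge hinj ha (hΦ.toFun_ne ha)
  exact ⟨c, Or.inl h⟩

theorem isFreeProduct_labelledFactor (hΦ : IsTreeing Φ) (hG : GeneratesCBER Φ R)
    (hf : Measurable f) (hinj : Function.Injective f) :
    IsFreeProduct R (labelledFactor Φ hf hinj) :=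
  CBER.isFreeProduct_of_isSubrelOf (labelledFactor_isSubrelOf hG hf hinj)
    (freelyIndep_labelledFactor hΦ hf hinj) (subset_iUnion_labelledDom hΦ hG hinj)
    fun _ _ => eqvGen_labelledFactor hΦ hG hf hinj

theorem CBER.Treeable.exists_isFreeProduct_finiteClasses [MeasurableSpace.CountablySeparated X]
    (hR : R.Treeable) :
    ∃ (ι : Type) (_ : Countable ι) (Rf : ι → CBER X),
      (∀ i, (Rf i).IsSubrelOf R) ∧ (∀ i, (Rf i).FiniteClasses) ∧ IsFreeProduct R Rf := by
  obtain ⟨Φ, hΦ, hG⟩ := hR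
  obtain ⟨f, hf, hinj⟩ := MeasurableSpace.measurable_injection_nat_bool_of_countablySeparated X
  exact ⟨_, inferInstance, labelledFactor Φ hf hinj, labelledFactor_isSubrelOf hG hf hinj,
    labelledFactor_finiteClasses hf hinj, isFreeProduct_labelledFactor hΦ hG hf hinj⟩

end Treeable

section Novikov

open Set PiNat Topology

variable {α : Type*}

def MeasurablySeparableFamily [MeasurableSpace α] (s : ℕ → Set α) : Prop :=
  ∃ u : ℕ → Set α, (∀ k, s k ⊆ u k) ∧ (∀ k, MeasurableSet (u k)) ∧ ⋂ k, u k = ∅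

theorem MeasurablySeparableFamily.of_update_iUnion [MeasurableSpace α] {s t : ℕ → Set α}
    {k₀ : ℕ} (hs : s k₀ = ⋃ i, t i)
    (h : ∀ i, MeasurablySeparableFamily (Function.update s k₀ (t i))) :
    MeasurablySeparableFamily s := by
  choose u hsu hu hempty using h
  refine ⟨Function.update (fun k => ⋂ i, u i k) k₀ (⋃ i, u i k₀), fun k => ?_, fun k => ?_, ?_⟩
  · rcases eq_or_ne k k₀ with rfl | hk
    · simpa [hs] using iUnion_mono fun i => by simpa using hsu i k
    · simpa [hk] using fun i => by simpa [hk] using hsu i k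
  · rcases eq_or_ne k k₀ with rfl | hk
    · simpa using MeasurableSet.iUnion fun i => hu i k
    · simpa [hk] using MeasurableSet.iInter fun i => hu i k
  · refine eq_empty_of_forall_notMem fun x hx => ?_
    have hx' := mem_iInter.1 hx
    obtain ⟨i, hi⟩ := mem_iUnion.1 (by simpa using hx' k₀)
    have : x ∈ ⋂ k, u i k := by
      refine mem_iInter.2 fun k => ?_
      rcases eq_or_ne k k₀ with rfl | hk
      · exact hi
      · simpa [hk] using mem_iInter.1 (by simpa [hk] using hx' k) i
    rwa [hempty i] at this

theorem measurablySeparableFamily_of_disjoint [MeasurableSpace α] {s : ℕ → Set α} {k k' : ℕ}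
    (hkk' : k ≠ k') {u v : Set α} (hu : MeasurableSet u) (hv : MeasurableSet v)
    (huv : Disjoint u v) (hsu : s k ⊆ u) (hsv : s k' ⊆ v) : MeasurablySeparableFamily s := by
  classical
  refine ⟨fun j => if j = k then u else if j = k' then v else univ, fun j => ?_, fun j => ?_, ?_⟩
  · dsimp only
    split_ifs with hk hk'
    exacts [hk ▸ hsu, hk' ▸ hsv, subset_univ _]
  · dsimp only
    split_ifs
    exacts [hu, hv, MeasurableSet.univ]
  · refine eq_empty_of_forall_notMem fun x hx => huv.notMem_of_mem_left (a := x) ?_ ?_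
    · simpa using mem_iInter.1 hx k
    · simpa [hkk'.symm] using mem_iInter.1 hx k'

theorem exists_cylinder_subset_preimage [TopologicalSpace α] {g : (ℕ → ℕ) → α} {x : ℕ → ℕ}
    (hg : ContinuousAt g x) {U : Set α} (hU : U ∈ 𝓝 (g x)) :
    ∃ N, cylinder x N ⊆ g ⁻¹' U := by
  obtain ⟨_, ⟨y, N, rfl⟩, hx, hsub⟩ :=
    (isTopologicalBasis_cylinders fun _ => ℕ).mem_nhds_iff.1 (hg hU)
  exact ⟨N, mem_cylinder_iff_eq.1 hx ▸ hsub⟩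

theorem exists_mem_cylinder_of_nested {E : ℕ → Type*} {w : ℕ → ∀ n, E n} {n : ℕ → ℕ}
    (hw : ∀ t, w (t + 1) ∈ cylinder (w t) (n t)) (hn : Monotone n)
    (hlim : ∀ N, ∃ t, N ≤ n t) : ∃ x, ∀ t, x ∈ cylinder (w t) (n t) := by
  have hnest : ∀ t t', t ≤ t' → w t' ∈ cylinder (w t) (n t) := by
    intro t t' htt'
    induction t', htt' using Nat.le_induction with
    | base => exact self_mem_cylinder _ _
    | succ t' htt' ih =>
      exact fun i hi => ((hw t') i (hi.trans_le (hn htt'))).trans (ih i hi)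
  choose T hT using fun m => hlim (m + 1)
  refine ⟨fun m => w (T m) m, fun t i hi => ?_⟩
  rw [← hnest t (max t (T i)) (le_max_left _ _) i hi]
  exact (hnest (T i) (max t (T i)) (le_max_right _ _) i (hT i)).symm

end Novikov

section Descent

open Set PiNat Topology Nat

variable {α : Type*} [MeasurableSpace α] (f : ℕ → (ℕ → ℕ) → α)

def cylinderImages (c : ℕ → (ℕ → ℕ) × ℕ) (k : ℕ) : Set α := f k '' cylinder (c k).1 (c k).2

def refineCylinder (c : ℕ → (ℕ → ℕ) × ℕ) (k i : ℕ) : ℕ → (ℕ → ℕ) × ℕ :=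
  Function.update c k (Function.update (c k).1 (c k).2 i, (c k).2 + 1)

theorem exists_refineCylinder_not_separable {c : ℕ → (ℕ → ℕ) × ℕ}
    (h : ¬MeasurablySeparableFamily (cylinderImages f c)) (k : ℕ) :
    ∃ i, ¬MeasurablySeparableFamily (cylinderImages f (refineCylinder c k i)) := by
  by_contra! h'
  refine h (MeasurablySeparableFamily.of_update_iUnion (k₀ := k)
    (t := fun i => f k '' cylinder (Function.update (c k).1 (c k).2 i) ((c k).2 + 1)) ?_
    fun i => ?_)
  · rw [cylinderImages, ← image_iUnion]
    exact congrArg (f k '' ·) (iUnion_cylinder_update _ _).symm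
  · convert h' i using 1
    funext j
    rcases eq_or_ne j k with rfl | hj
    · simp [cylinderImages, refineCylinder]
    · simp [cylinderImages, refineCylinder, hj]

/-- Dovetailed descent: step `t` lengthens the cylinder of index `(unpair t).1`, keeping the
family of images non-separable whenever it was. -/
noncomputable def descent (c₀ : ℕ → (ℕ → ℕ) × ℕ) : ℕ → ℕ → (ℕ → ℕ) × ℕ
  | 0 => c₀
  | t + 1 => refineCylinder (descent c₀ t) (unpair t).1 <| Classical.epsilon fun i =>
      ¬MeasurablySeparableFamily (cylinderImages f (refineCylinder (descent c₀ t) (unpair t).1 i))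

variable {f} {c₀ : ℕ → (ℕ → ℕ) × ℕ}

theorem descent_not_separable (h₀ : ¬MeasurablySeparableFamily (cylinderImages f c₀)) (t : ℕ) :
    ¬MeasurablySeparableFamily (cylinderImages f (descent f c₀ t)) := by
  induction t with
  | zero => exact h₀
  | succ t ih => exact Classical.epsilon_spec (exists_refineCylinder_not_separable f ih _)

theorem descent_succ_mem_cylinder (t k : ℕ) :
    (descent f c₀ (t + 1) k).1 ∈ cylinder (descent f c₀ t k).1 (descent f c₀ t k).2 := by
  rcases eq_or_ne k (unpair t).1 with rfl | hk
  · simp only [descent, refineCylinder, Function.update_self]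
    exact fun i hi => Function.update_of_ne hi.ne _ _
  · simp only [descent, refineCylinder, Function.update_of_ne hk]
    exact self_mem_cylinder _ _

theorem descent_length_succ (t k : ℕ) :
    (descent f c₀ (t + 1) k).2 = (descent f c₀ t k).2 + if k = (unpair t).1 then 1 else 0 := by
  rcases eq_or_ne k (unpair t).1 with rfl | hk
  · simp [descent, refineCylinder]
  · simp [descent, refineCylinder, hk]

theorem monotone_descent_length (k : ℕ) : Monotone fun t => (descent f c₀ t k).2 :=
  monotone_nat_of_le_succ fun t => by rw [descent_length_succ]; omega

theorem le_descent_length_pair (k N : ℕ) : N ≤ (descent f c₀ (pair k N) k).2 := by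
  induction N with
  | zero => exact Nat.zero_le _
  | succ N ih =>
    have hstep := descent_length_succ (f := f) (c₀ := c₀) (pair k N) k
    rw [unpair_pair, if_pos rfl] at hstep
    have hmono : (descent f c₀ (pair k N + 1) k).2 ≤ (descent f c₀ (pair k (N + 1)) k).2 :=
      monotone_descent_length k (pair_lt_pair_right k (Nat.lt_succ_self N))
    omega

end Descent

open Set PiNat Topology Nat in
/-- **Novikov's separation theorem.** Otherwise the dovetailed descent produces limit points
`x k` of its cylinders; the points `f k (x k)` cannot all coincide, and two distinct ones are
separated by open sets, which by continuity contain the images of long enough cylinders. -/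
theorem MeasureTheory.AnalyticSet.measurablySeparableFamily {α : Type*} [TopologicalSpace α]
    [T2Space α] [MeasurableSpace α] [OpensMeasurableSpace α] {s : ℕ → Set α}
    (hs : ∀ k, AnalyticSet (s k)) (h : ⋂ k, s k = ∅) : MeasurablySeparableFamily s := by
  by_cases hempty : ∃ k, s k = ∅
  · obtain ⟨k, hk⟩ := hempty
    exact measurablySeparableFamily_of_disjoint (Nat.succ_ne_self k).symm MeasurableSet.empty
      MeasurableSet.univ (empty_disjoint _) hk.subset (subset_univ _)
  choose f hf hrange using fun k =>
    ((AnalyticSet_def _).mp (hs k)).resolve_left fun hk => hempty ⟨k, hk⟩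
  by_contra hsep
  set c₀ : ℕ → (ℕ → ℕ) × ℕ := fun _ => (0, 0)
  have h₀ : ¬MeasurablySeparableFamily (cylinderImages f c₀) := by
    have himages : cylinderImages f c₀ = s := by
      funext k
      simp [cylinderImages, c₀, cylinder_zero, hrange]
    rwa [himages]
  choose x hx using fun k => exists_mem_cylinder_of_nested
    (fun t => descent_succ_mem_cylinder (f := f) (c₀ := c₀) t k) (monotone_descent_length k)
    fun N => ⟨pair k N, le_descent_length_pair k N⟩
  by_cases hconst : ∀ k, f k (x k) = f 0 (x 0)
  · refine (eq_empty_iff_forall_notMem.1 h) (f 0 (x 0)) (mem_iInter.2 fun k => ?_)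
    exact hrange k ▸ hconst k ▸ mem_range_self _
  push Not at hconst
  obtain ⟨k, hk⟩ := hconst
  have hk0 : k ≠ 0 := by rintro rfl; exact hk rfl
  obtain ⟨U, V, hU, hV, hxU, hxV, hUV⟩ := t2_separation hk
  obtain ⟨N, hN⟩ := exists_cylinder_subset_preimage (hf k).continuousAt (hU.mem_nhds hxU)
  obtain ⟨N', hN'⟩ := exists_cylinder_subset_preimage (hf 0).continuousAt (hV.mem_nhds hxV)
  set t := max (pair k N) (pair 0 N')
  have hsub : ∀ j M W, PiNat.cylinder (x j) M ⊆ f j ⁻¹' W → pair j M ≤ t →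
      cylinderImages f (descent f c₀ t) j ⊆ W := by
    intro j M W hM hjM
    rw [cylinderImages, image_subset_iff, ← mem_cylinder_iff_eq.1 (hx j t)]
    exact (cylinder_anti _ ((le_descent_length_pair j M).trans
      (monotone_descent_length j hjM))).trans hM
  exact descent_not_separable h₀ t <| measurablySeparableFamily_of_disjoint hk0
    hU.measurableSet hV.measurableSet hUV (hsub k N U hN (le_max_left _ _))
    (hsub 0 N' V hN' (le_max_right _ _))

section LusinNovikov

open Set

variable {α : Type*}

def sectionTuples (W : Set (α × ℝ)) (k : ℕ) : Set (α × (Fin k → ℝ)) :=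
  {p | StrictMono p.2 ∧ ∀ i, (p.1, p.2 i) ∈ W}

theorem encard_range_of_strictMono {k : ℕ} {b : Fin k → ℝ} (hb : StrictMono b) :
    (range b).encard = k := by
  rw [← image_univ, hb.injective.encard_image, encard_univ, ENat.card_eq_coe_fintype_card,
    Fintype.card_fin]

theorem exists_strictMono_mem_of_le_encard {s : Set ℝ} {k : ℕ} (h : (k : ℕ∞) ≤ s.encard) :
    ∃ b : Fin k → ℝ, StrictMono b ∧ ∀ i, b i ∈ s := by
  obtain ⟨t, hts, htk⟩ := exists_subset_encard_eq h
  have ht : t.Finite := finite_of_encard_eq_coe htk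
  have hcard : ht.toFinset.card = k := by
    rw [ht.encard_eq_coe_toFinset_card] at htk
    exact_mod_cast htk
  exact ⟨ht.toFinset.orderEmbOfFin hcard, (ht.toFinset.orderEmbOfFin hcard).strictMono,
    fun i => hts (ht.mem_toFinset.1 (Finset.orderEmbOfFin_mem _ _ i))⟩

theorem image_fst_sectionTuples (W : Set (α × ℝ)) (k : ℕ) :
    Prod.fst '' sectionTuples W k = {a | (k : ℕ∞) ≤ (Prod.mk a ⁻¹' W).encard} := by
  ext a
  constructor
  · rintro ⟨⟨a, b⟩, ⟨hb, hbW⟩, rfl⟩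
    rw [mem_ofPred_eq, ← encard_range_of_strictMono hb]
    exact encard_le_encard (range_subset_iff.2 hbW)
  · intro h
    obtain ⟨b, hb, hbW⟩ := exists_strictMono_mem_of_le_encard h
    exact ⟨(a, b), ⟨hb, hbW⟩, rfl⟩

theorem measurableSet_sectionTuples [MeasurableSpace α] {W : Set (α × ℝ)} (hW : MeasurableSet W)
    (k : ℕ) : MeasurableSet (sectionTuples W k) := by
  have hcoord : ∀ i : Fin k, Measurable fun p : α × (Fin k → ℝ) => p.2 i :=
    fun i => (measurable_pi_apply i).comp measurable_snd
  have hset : sectionTuples W k = (⋂ i, ⋂ j, ⋂ (_ : i < j), {p | p.2 i < p.2 j}) ∩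
      ⋂ i, (fun p => (p.1, p.2 i)) ⁻¹' W := by
    ext p
    simp [sectionTuples, StrictMono]
  rw [hset]
  exact (MeasurableSet.iInter fun i => .iInter fun j => .iInter fun _ =>
    measurableSet_lt (hcoord i) (hcoord j)).inter
      (.iInter fun i => (measurable_fst.prodMk (hcoord i)) hW)

theorem analyticSet_le_encard_section [TopologicalSpace α] [PolishSpace α] [MeasurableSpace α]
    [BorelSpace α] {W : Set (α × ℝ)} (hW : MeasurableSet W) (k : ℕ) :
    AnalyticSet {a : α | (k : ℕ∞) ≤ (Prod.mk a ⁻¹' W).encard} := by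
  rw [← image_fst_sectionTuples]
  exact (measurableSet_sectionTuples hW k).analyticSet.image_of_continuous continuous_fst

theorem encard_section_inter_le {W : Set (α × ℝ)} {A : Set α} {N : ℕ∞}
    (h : ∀ a ∉ A, (Prod.mk a ⁻¹' W).encard ≤ N) (a : α) :
    (Prod.mk a ⁻¹' (W ∩ Prod.fst ⁻¹' Aᶜ)).encard ≤ N := by
  by_cases ha : a ∈ A
  · simp [preimage, ha]
  · simpa [preimage, ha] using h a ha

/-- The bounded case of the Lusin–Novikov theorem: by the Lusin–Souslin theorem, the points
whose section has maximal size `N + 1` form a Borel set, as the injective projection of the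
increasing enumerations of their sections. -/
theorem measurableSet_image_fst_of_encard_le [MeasurableSpace α] [StandardBorelSpace α] (N : ℕ)
    {W : Set (α × ℝ)} (hW : MeasurableSet W) (hN : ∀ a, (Prod.mk a ⁻¹' W).encard ≤ N) :
    MeasurableSet (Prod.fst '' W) := by
  induction N generalizing W with
  | zero =>
    have hempty : W = ∅ := eq_empty_of_forall_notMem fun p hp => by
      have hsec : Prod.mk p.1 ⁻¹' W = ∅ := by simpa using hN p.1
      exact (eq_empty_iff_forall_notMem.1 hsec) p.2 hp
    simp [hempty]
  | succ N ih =>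
    set G := Prod.fst '' sectionTuples W (N + 1)
    have hrange : ∀ {a b}, (a, b) ∈ sectionTuples W (N + 1) → range b = Prod.mk a ⁻¹' W :=
      fun ⟨hb, hbW⟩ => (finite_range _).eq_of_subset_of_encard_le (range_subset_iff.2 hbW)
        ((hN _).trans (encard_range_of_strictMono hb).ge)
    have hG : MeasurableSet G := by
      refine (measurableSet_sectionTuples hW _).image_of_measurable_injOn measurable_fst ?_
      rintro ⟨a, b⟩ hab ⟨a', b'⟩ hab' (rfl : a = a')
      exact Prod.ext rfl ((hab.1.range_inj hab'.1).1 ((hrange hab).trans (hrange hab').symm))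
    have hW' := ih (hW.inter (measurable_fst hG.compl)) <| encard_section_inter_le fun a ha => by
      simp only [G, image_fst_sectionTuples, mem_ofPred_eq, not_le] at ha
      exact Order.le_of_lt_add_one ha
    have hunion : Prod.fst '' W = Prod.fst '' (W ∩ Prod.fst ⁻¹' Gᶜ) ∪ G := by
      refine Subset.antisymm (fun a ⟨p, hp, hpa⟩ => ?_)
        (union_subset (image_mono inter_subset_left) ?_)
      · by_cases haG : a ∈ G
        exacts [Or.inr haG, Or.inl ⟨p, ⟨hp, fun h => haG (hpa ▸ h)⟩, hpa⟩]
      · rintro _ ⟨⟨a, b⟩, ⟨-, hbW⟩, rfl⟩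
        exact ⟨(a, b 0), hbW 0, rfl⟩
    rw [hunion]
    exact hW'.union hG

/-- **Lusin–Novikov theorem** for finite sections. By Novikov's separation theorem, the analytic
sets of points with at least `k` points in their section are covered by Borel sets `E k` with
empty intersection; off `E k` the sections have at most `k` points. -/
theorem measurableSet_image_fst_of_finite [TopologicalSpace α] [PolishSpace α] [MeasurableSpace α]
    [BorelSpace α] {W : Set (α × ℝ)} (hW : MeasurableSet W)
    (hfin : ∀ a, (Prod.mk a ⁻¹' W).Finite) : MeasurableSet (Prod.fst '' W) := by
  obtain ⟨E, hDE, hE, hEempty⟩ := AnalyticSet.measurablySeparableFamily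
    (analyticSet_le_encard_section hW) <| eq_empty_of_forall_notMem fun a ha => by
      have h := mem_iInter.1 ha ((hfin a).toFinset.card + 1)
      rw [mem_ofPred_eq, (hfin a).encard_eq_coe_toFinset_card] at h
      exact absurd (by exact_mod_cast h) (Nat.not_succ_le_self _)
  have hcover : Prod.fst '' W = ⋃ k, Prod.fst '' (W ∩ Prod.fst ⁻¹' (E k)ᶜ) := by
    refine Subset.antisymm (fun a ⟨p, hp, hpa⟩ => ?_)
      (iUnion_subset fun k => image_mono inter_subset_left)
    obtain ⟨k, hk⟩ : ∃ k, p.1 ∉ E k := by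
      by_contra! h
      exact (eq_empty_iff_forall_notMem.1 hEempty) p.1 (mem_iInter.2 h)
    exact mem_iUnion.2 ⟨k, p, ⟨hp, hk⟩, hpa⟩
  rw [hcover]
  refine .iUnion fun k => measurableSet_image_fst_of_encard_le k
    (hW.inter (measurable_fst (hE k).compl)) (encard_section_inter_le fun a ha => ?_)
  exact (not_le.1 fun h => ha (hDE k h)).le

end LusinNovikov

open Set in
/-- The `g`-least points of the classes form a Borel transversal: the points that are not least
form the projection of a Borel subset of `ℝ × ℝ` with finite sections. -/
theorem CBER.smooth_of_finiteClasses {X : Type} [MeasurableSpace X] [StandardBorelSpace X]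
    {S : CBER X} (hS : S.FiniteClasses) : S.Smooth := by
  obtain ⟨g, hg⟩ := exists_measurableEmbedding_real X
  set W : Set (ℝ × ℝ) := Prod.map g g '' {p | S.rel p.1 p.2 ∧ g p.2 < g p.1}
  have hW : MeasurableSet W := (hg.prodMap hg).measurableSet_image.2 <| S.rel_meas.inter <|
    measurableSet_lt (hg.measurable.comp measurable_snd) (hg.measurable.comp measurable_fst)
  have hfin : ∀ a, (Prod.mk a ⁻¹' W).Finite := by
    intro a
    by_cases ha : ∃ x, g x = a
    · obtain ⟨x, rfl⟩ := ha
      refine ((S.finite_cls hS x).image g).subset ?_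
      rintro _ ⟨⟨u, v⟩, ⟨huv, -⟩, heq⟩
      obtain ⟨hu, rfl⟩ := Prod.mk.inj heq
      exact ⟨v, hg.injective hu ▸ huv, rfl⟩
    · convert finite_empty
      refine eq_empty_of_forall_notMem ?_
      rintro b ⟨⟨u, v⟩, -, heq⟩
      exact ha ⟨u, congrArg Prod.fst heq⟩
  have hproj : ∀ x, g x ∈ Prod.fst '' W ↔ ∃ y, S.rel x y ∧ g y < g x := by
    refine fun x => ⟨?_, fun ⟨y, hxy, hlt⟩ => ⟨(g x, g y), ⟨(x, y), ⟨hxy, hlt⟩, rfl⟩, rfl⟩⟩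
    rintro ⟨_, ⟨⟨u, v⟩, ⟨huv, hlt⟩, rfl⟩, hux⟩
    cases hg.injective hux
    exact ⟨v, huv, hlt⟩
  set D := {x ∈ S.dom | ∀ y, S.rel x y → g x ≤ g y}
  have hD : D = S.dom \ g ⁻¹' (Prod.fst '' W) := by
    ext x
    simp only [D, mem_sdiff, mem_preimage, hproj, mem_ofPred_eq, not_exists, not_and, not_lt]
  refine ⟨D, ?_, fun x hx => hx.1, fun x hx => ?_⟩
  · rw [hD]
    exact S.dom_meas.diff (hg.measurable (measurableSet_image_fst_of_finite hW hfin))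
  obtain ⟨m, hxm, hmin⟩ := exists_min_image (S.cls x) g (hS x hx) ⟨x, S.refl x hx⟩
  refine ⟨m, ⟨⟨(S.rel_dom hxm).2, fun y hmy => hmin y (S.trans hxm hmy)⟩, hxm⟩, ?_⟩
  rintro y ⟨⟨-, hymin⟩, hxy⟩
  exact hg.injective ((hymin m (S.trans (S.symm hxy) hxm)).antisymm (hmin y hxy))

section Hyperfinite

variable {X : Type} [MeasurableSpace X]

/-- `S 0`, followed by the restrictions of the `S (n + 1)` to Borel transversals `D n` of the
`S n`. -/
def layerFactor (S : ℕ → CBER X) (D : ℕ → Set X) (hD : ∀ n, MeasurableSet (D n)) : ℕ → CBER X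
  | 0 => S 0
  | n + 1 => (S (n + 1)).restrict (D n) (hD n)

variable {S : ℕ → CBER X} {D : ℕ → Set X} {hD : ∀ n, MeasurableSet (D n)}

theorem layerFactor_isSubrelOf (k : ℕ) : (layerFactor S D hD k).IsSubrelOf (S k) := by
  cases k
  exacts [⟨subset_rfl, fun _ _ => id⟩, ⟨Set.inter_subset_left, fun _ _ h => h.1⟩]

theorem eqvGen_layerFactor (hS : Monotone fun n => (S n).rel)
    (hsec : ∀ n, ∀ a ∈ (S (n + 1)).dom, ∃ b ∈ D n, (S n).rel a b) {n : ℕ} {a b : X}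
    (h : (S n).rel a b) :
    Relation.EqvGen (fun a b => ∃ k, (layerFactor S D hD k).rel a b) a b := by
  induction n generalizing a b with
  | zero => exact .rel _ _ ⟨0, h⟩
  | succ n ih =>
    obtain ⟨a', ha', haa'⟩ := hsec n a ((S (n + 1)).rel_dom h).1
    obtain ⟨b', hb', hbb'⟩ := hsec n b ((S (n + 1)).rel_dom h).2
    have h' : (S (n + 1)).rel a' b' :=
      (S (n + 1)).trans ((S (n + 1)).symm (hS n.le_succ a a' haa'))
        ((S (n + 1)).trans h (hS n.le_succ b b' hbb'))
    exact .trans _ _ _ (ih haa')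
      (.trans _ _ _ (.rel _ _ ⟨n + 1, h', ha', hb'⟩) (.symm _ _ (ih hbb')))

theorem eq_or_rel_of_path (hS : Monotone fun n => (S n).rel) {x : ℕ → X}
    {i : ℕ → ℕ} {n a b : ℕ} (hab : a ≤ b)
    (hstep : ∀ j, a ≤ j → j < b → i j ≤ n ∧ (layerFactor S D hD (i j)).rel (x j) (x (j + 1))) :
    x a = x b ∨ (S n).rel (x a) (x b) := by
  induction b, hab using Nat.le_induction with
  | base => exact Or.inl rfl
  | succ b hab ih =>
    obtain ⟨hin, hrel⟩ := hstep b hab (lt_add_one b)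
    have h := hS hin _ _ ((layerFactor_isSubrelOf _).2 _ _ hrel)
    rcases ih fun j hj hjb => hstep j hj (hjb.trans (lt_add_one b)) with he | h'
    · exact Or.inr (he ▸ h)
    · exact Or.inr ((S n).trans h' h)

theorem eq_of_path_of_mem (hS : Monotone fun n => (S n).rel)
    (htrans : ∀ n a b, a ∈ D n → b ∈ D n → (S n).rel a b → a = b) {x : ℕ → X} {i : ℕ → ℕ}
    {n a b : ℕ} (hab : a ≤ b) (ha : x a ∈ D n) (hb : x b ∈ D n)
    (hstep : ∀ j, a ≤ j → j < b → i j ≤ n ∧ (layerFactor S D hD (i j)).rel (x j) (x (j + 1))) :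
    x a = x b :=
  (eq_or_rel_of_path hS hab hstep).elim id (htrans n _ _ ha hb)

/-- Going around the rest of the cycle, the endpoints of step `k` are `S M`-related, hence
equal. -/
theorem eq_of_single_step (hS : Monotone fun n => (S n).rel)
    (htrans : ∀ n a b, a ∈ D n → b ∈ D n → (S n).rel a b → a = b) {x : ℕ → X} {i : ℕ → ℕ}
    {M a b k : ℕ} (hak : a ≤ k) (hkb : k < b) (hx : x b = x a) (hk : x k ∈ D M)
    (hk' : x (k + 1) ∈ D M)
    (hstep : ∀ j, a ≤ j → j < b → j ≠ k →
      i j ≤ M ∧ (layerFactor S D hD (i j)).rel (x j) (x (j + 1))) :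
    x k = x (k + 1) := by
  have hafter := eq_or_rel_of_path hS hkb fun j h₁ h₂ => hstep j (by omega) h₂ (by omega)
  have hbefore := eq_or_rel_of_path hS hak fun j h₁ h₂ => hstep j h₁ (by omega) (by omega)
  rw [hx] at hafter
  exact ((CBER.eq_or_rel_trans hafter hbefore).elim id
    fun h => htrans M _ _ hk' hk h).symm

/-- The steps of index `M + 1` of a reduced cycle join points of the transversal `D M`. Either
two consecutive such steps enclose a shorter reduced cycle of lower index, or there is only one
such step, which `eq_of_single_step` makes trivial. -/
theorem not_reducedCycle_layerFactor (hS : Monotone fun n => (S n).rel)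
    (htrans : ∀ n a b, a ∈ D n → b ∈ D n → (S n).rel a b → a = b) (M : ℕ) {x : ℕ → X}
    {i : ℕ → ℕ} {a b : ℕ} (hab : a < b) (hx : x b = x a)
    (hne : ∀ j, a ≤ j → j < b → x j ≠ x (j + 1))
    (hstep : ∀ j, a ≤ j → j < b → i j ≤ M ∧ (layerFactor S D hD (i j)).rel (x j) (x (j + 1)))
    (hred : ∀ j, a ≤ j → j + 1 < b → i j ≠ i (j + 1)) : False := by
  induction M generalizing a b with
  | zero =>
    by_cases hb : b = a + 1
    · subst hb
      exact hne a le_rfl (lt_add_one a) hx.symm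
    · have h₀ := (hstep a le_rfl hab).1
      have h₁ := (hstep (a + 1) (by omega) (by omega)).1
      exact hred a le_rfl (by omega) (by omega)
  | succ M ih =>
    classical
    have hle : ∀ j, a ≤ j → j < b → i j ≠ M + 1 →
        i j ≤ M ∧ (layerFactor S D hD (i j)).rel (x j) (x (j + 1)) := fun j hj hjb hij =>
      ⟨by have := (hstep j hj hjb).1; omega, (hstep j hj hjb).2⟩
    have htopD : ∀ j, a ≤ j → j < b → i j = M + 1 → x j ∈ D M ∧ x (j + 1) ∈ D M := by
      intro j hj hjb hij
      have h := (hstep j hj hjb).2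
      rw [hij] at h
      exact h.2
    by_cases htop : ∃ j, a ≤ j ∧ j < b ∧ i j = M + 1
    swap
    · push Not at htop
      exact ih hab hx hne (fun j hj hjb => hle j hj hjb (htop j hj hjb)) hred
    obtain ⟨haj₁, hj₁b, hj₁⟩ := Nat.find_spec htop
    set j₁ := Nat.find htop
    by_cases hnext : ∃ j, j₁ < j ∧ j < b ∧ i j = M + 1
    · obtain ⟨hj₁₂, hj₂b, hj₂⟩ := Nat.find_spec hnext
      set j₂ := Nat.find hnext
      have hbelow : ∀ j, j₁ + 1 ≤ j → j < j₂ →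
          i j ≤ M ∧ (layerFactor S D hD (i j)).rel (x j) (x (j + 1)) := fun j h₁ h₂ =>
        hle j (by omega) (by omega) fun hij => Nat.find_min hnext h₂ ⟨by omega, by omega, hij⟩
      have hlen : j₁ + 1 < j₂ := by
        refine lt_of_le_of_ne hj₁₂ fun h => hred j₁ haj₁ (by omega) ?_
        rw [hj₁, h, hj₂]
      have heq := eq_of_path_of_mem hS htrans hlen.le (htopD j₁ haj₁ hj₁b hj₁).2
        (htopD j₂ (by omega) hj₂b hj₂).1 hbelow
      exact ih hlen heq.symm (fun j h₁ h₂ => hne j (by omega) (by omega)) hbelow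
        (fun j h₁ h₂ => hred j (by omega) (by omega))
    · push Not at hnext
      refine hne j₁ haj₁ hj₁b (eq_of_single_step hS htrans haj₁ hj₁b hx (htopD j₁ haj₁ hj₁b hj₁).1
        (htopD j₁ haj₁ hj₁b hj₁).2 fun j hj hjb hjj₁ => hle j hj hjb ?_)
      rcases Nat.lt_or_gt_of_ne hjj₁ with hlt | hgt
      · exact fun hij => Nat.find_min htop hlt ⟨hj, hjb, hij⟩
      · exact hnext j hgt hjb

theorem freelyIndep_layerFactor (hS : Monotone fun n => (S n).rel)
    (htrans : ∀ n a b, a ∈ D n → b ∈ D n → (S n).rel a b → a = b) :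
    FreelyIndep (layerFactor S D hD) := by
  intro n x i hn hxn hne hrel
  by_contra! hred
  exact not_reducedCycle_layerFactor hS htrans ((Finset.range n).sup i) (a := 0) (by omega) hxn
    (fun j _ hj => hne j hj)
    (fun j _ hj => ⟨Finset.le_sup (Finset.mem_range.2 hj), hrel j hj⟩)
    (fun j _ hj => hred j hj)

end Hyperfinite

theorem CBER.Hyperfinite.exists_isFreeProduct_finiteClasses {X : Type} [MeasurableSpace X]
    [StandardBorelSpace X] {R : CBER X} (hR : R.Hyperfinite) :
    ∃ (ι : Type) (_ : Countable ι) (Rf : ι → CBER X),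
      (∀ i, (Rf i).IsSubrelOf R) ∧ (∀ i, (Rf i).FiniteClasses) ∧ IsFreeProduct R Rf := by
  obtain ⟨S, hSR, hSfin, hSdom, hS, hRS⟩ := hR
  have hmono : Monotone fun n => (S n).rel := monotone_nat_of_le_succ hS
  choose D hD hDdom hDuniq using fun n => CBER.smooth_of_finiteClasses (hSfin n)
  have htrans : ∀ n a b, a ∈ D n → b ∈ D n → (S n).rel a b → a = b := fun n a b ha hb hab =>
    (hDuniq n a (hDdom n ha)).unique ⟨ha, (S n).refl a (hDdom n ha)⟩ ⟨hb, hab⟩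
  have hsec : ∀ n, ∀ a ∈ (S (n + 1)).dom, ∃ b ∈ D n, (S n).rel a b := fun n a ha => by
    rw [hSdom, ← hSdom n] at ha
    obtain ⟨b, ⟨hb, hab⟩, -⟩ := hDuniq n a ha
    exact ⟨b, hb, hab⟩
  have hsub : ∀ k, (layerFactor S D hD k).IsSubrelOf R :=
    fun k => (layerFactor_isSubrelOf k).trans (hSR k)
  refine ⟨ℕ, inferInstance, layerFactor S D hD, hsub,
    fun k => (layerFactor_isSubrelOf k).finiteClasses (hSfin k),
    CBER.isFreeProduct_of_isSubrelOf hsub (freelyIndep_layerFactor hmono htrans)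
      (fun a ha => Set.mem_iUnion.2 ⟨0, (hSdom 0).symm ▸ ha⟩) fun x y h => ?_⟩
  obtain ⟨n, hn⟩ := hRS x y h
  exact eqvGen_layerFactor hmono hsec hn

/-- Every treeable countable Borel equivalence relation is a free product of an
at most countable family of finite Borel subrelations; in particular this holds for every
hyperfinite countable Borel equivalence relation. -/
theorem treeable_free_product_of_finite_subrelations :
    (∀ (X : Type) [MeasurableSpace X] [StandardBorelSpace X] (R : CBER X),
      R.Treeable →
        ∃ (ι : Type) (_ : Countable ι) (Rf : ι → CBER X),
          (∀ i, (Rf i).IsSubrelOf R) ∧ (∀ i, (Rf i).FiniteClasses) ∧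
            IsFreeProduct R Rf) ∧
    (∀ (X : Type) [MeasurableSpace X] [StandardBorelSpace X] (R : CBER X),
      R.Hyperfinite →
        ∃ (ι : Type) (_ : Countable ι) (Rf : ι → CBER X),
          (∀ i, (Rf i).IsSubrelOf R) ∧ (∀ i, (Rf i).FiniteClasses) ∧
            IsFreeProduct R Rf) :=
  ⟨fun _ _ _ _ hR => hR.exists_isFreeProduct_finiteClasses,
    fun _ _ _ _ hR => hR.exists_isFreeProduct_finiteClasses⟩
end

section
/- Let R = *_{j∈J} R_j be a free product decomposition of a countable Borel equivalence relation on X that is trivialized by a partition U = ⊔_{j∈J} U_j (i.e. U is a complete section for R, the partition is R|U-invariant, and R|U_j = R_j|U_j for every j). For j ∈ J let Ū_j := R_j U_j denote the R_j-saturation of U_j. Then: (a) the partition U = ⊔_{j∈J} Ū_j obtained by replacing each U_j by Ū_j also trivializes the decomposition; (b) for every i ≠ j the restriction R_j|Ū_i is trivial; and (c) the restriction of R_j to X ∖ Ū_j is smooth. -/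
open MeasureTheory

section Walks

variable {X : Type} [MeasurableSpace X] {J : Type}

/-- A walk of length `n` in the union of the relations `Rf i`. -/
def Wk (Rf : J → CBER X) (n : ℕ) (c : ℕ → J) (p : ℕ → X) : Prop :=
  ∀ k, k < n → (Rf (c k)).rel (p k) (p (k + 1))

/-- A reduced walk: consecutive points distinct and adjacent indices distinct. -/
def RWk (Rf : J → CBER X) (n : ℕ) (c : ℕ → J) (p : ℕ → X) : Prop :=
  Wk Rf n c p ∧ (∀ k, k < n → p k ≠ p (k + 1)) ∧ (∀ k, k + 1 < n → c k ≠ c (k + 1))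

variable {Rf : J → CBER X}

lemma RWk.zero {c : ℕ → J} {p : ℕ → X} : RWk Rf 0 c p :=
  ⟨fun k hk => absurd hk (by omega), fun k hk => absurd hk (by omega),
   fun k hk => absurd hk (by omega)⟩

lemma RWk_mono {n m : ℕ} {c : ℕ → J} {p : ℕ → X} (h : RWk Rf n c p) (hm : m ≤ n) :
    RWk Rf m c p :=
  ⟨fun k hk => h.1 k (by omega), fun k hk => h.2.1 k (by omega),
   fun k hk => h.2.2 k (by omega)⟩

lemma no_cycle (hfree : FreelyIndep Rf) {n : ℕ} {c : ℕ → J} {p : ℕ → X}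
    (h : RWk Rf n c p) (hn : 1 ≤ n) (hcyc : p n = p 0) : False := by
  rcases eq_or_lt_of_le hn with h1 | h2
  · have : p 1 = p 0 := by rw [h1]; exact hcyc
    exact h.2.1 0 (by omega) this.symm
  · obtain ⟨k, hk, he⟩ := hfree n p c (by omega) hcyc (fun k hk => h.2.1 k hk)
      (fun k hk => h.1 k hk)
    exact h.2.2 k hk he

lemma Wk_reverse {n : ℕ} {c : ℕ → J} {p : ℕ → X} (h : Wk Rf n c p) :
    Wk Rf n (fun k => c (n - 1 - k)) (fun k => p (n - k)) := by
  intro k hk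
  have h1 : n - k = (n - 1 - k) + 1 := by omega
  have h2 : n - (k + 1) = n - 1 - k := by omega
  simp only [h1, h2]
  exact (Rf _).symm (h (n - 1 - k) (by omega))

lemma Wk_concat {n m : ℕ} {c d : ℕ → J} {p q : ℕ → X} (h1 : Wk Rf n c p) (h2 : Wk Rf m d q)
    (hj : p n = q 0) :
    Wk Rf (n + m) (fun k => if k < n then c k else d (k - n))
      (fun k => if k < n then p k else q (k - n)) := by
  intro k hk
  by_cases h : k < n
  · by_cases h' : k + 1 < n
    · simp only [if_pos h, if_pos h']; exact h1 k h
    · have hkn : k + 1 = n := by omega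
      simp only [if_pos h, if_neg h']
      have : q (k + 1 - n) = p (k + 1) := by
        rw [show k + 1 - n = 0 by omega, ← hj, hkn]
      rw [this]; exact h1 k h
  · simp only [if_neg h, if_neg (show ¬ k + 1 < n by omega)]
    rw [show k + 1 - n = (k - n) + 1 by omega]
    exact h2 (k - n) (by omega)

/-- Any walk can be reduced, keeping the endpoints. -/
lemma Wk_red {n : ℕ} {c : ℕ → J} {p : ℕ → X} (h : Wk Rf n c p) :
    ∃ m d q, RWk Rf m d q ∧ q 0 = p 0 ∧ q m = p n := by
  induction n generalizing c p with
  | zero => exact ⟨0, c, p, RWk.zero, rfl, rfl⟩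
  | succ n ih =>
    obtain ⟨m, d, q, hq, h0, he⟩ :=
      ih (c := fun k => c (k + 1)) (p := fun k => p (k + 1)) (fun k hk => h (k + 1) (by omega))
    have step : (Rf (c 0)).rel (p 0) (p 1) := h 0 (by omega)
    by_cases h01 : p 0 = p 1
    · exact ⟨m, d, q, hq, by rw [h0, h01], he⟩
    rcases Nat.eq_zero_or_pos m with hm0 | hm1
    · refine ⟨1, fun _ => c 0, fun k => if k = 0 then p 0 else p 1, ⟨?_, ?_, ?_⟩, by simp, ?_⟩
      · intro k hk
        have hk0 : k = 0 := by omega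
        subst hk0; simpa using step
      · intro k hk
        have hk0 : k = 0 := by omega
        subst hk0; simpa using h01
      · intro k hk; omega
      · simp only [if_neg one_ne_zero]
        rw [hm0] at he; rw [← h0, he]
    · by_cases hcc : c 0 = d 0
      · have stepq : (Rf (d 0)).rel (q 0) (q 1) := hq.1 0 hm1
        have step2' : (Rf (d 0)).rel (p 0) (q 0) := by
          rw [h0, ← hcc]; exact step
        have step2 : (Rf (d 0)).rel (p 0) (q 1) := (Rf (d 0)).trans step2' stepq
        by_cases hpq : p 0 = q 1
        · refine ⟨m - 1, fun k => d (k + 1), fun k => q (k + 1), ⟨?_, ?_, ?_⟩, hpq.symm, ?_⟩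
          · intro k hk; exact hq.1 (k + 1) (by omega)
          · intro k hk; exact hq.2.1 (k + 1) (by omega)
          · intro k hk; exact hq.2.2 (k + 1) (by omega)
          · show q (m - 1 + 1) = p (n + 1)
            rw [show m - 1 + 1 = m by omega]; exact he
        · refine ⟨m, d, fun k => if k = 0 then p 0 else q k, ⟨?_, ?_, ?_⟩, by simp, ?_⟩
          · intro k hk
            rcases Nat.eq_zero_or_pos k with hk0 | hk1
            · subst hk0
              simp only [if_pos rfl, if_neg one_ne_zero]
              exact step2
            · simp only [if_neg (by omega : ¬ k = 0), if_neg (by omega : ¬ k + 1 = 0)]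
              exact hq.1 k hk
          · intro k hk
            rcases Nat.eq_zero_or_pos k with hk0 | hk1
            · subst hk0
              simp only [if_pos rfl, if_neg one_ne_zero]
              exact hpq
            · simp only [if_neg (by omega : ¬ k = 0), if_neg (by omega : ¬ k + 1 = 0)]
              exact hq.2.1 k hk
          · exact hq.2.2
          · simp only [if_neg (by omega : ¬ m = 0)]; exact he
      · refine ⟨m + 1, fun k => if k = 0 then c 0 else d (k - 1),
          fun k => if k = 0 then p 0 else q (k - 1), ⟨?_, ?_, ?_⟩, by simp, ?_⟩
        · intro k hk
          rcases Nat.eq_zero_or_pos k with hk0 | hk1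
          · subst hk0
            simp only [if_pos rfl, if_neg one_ne_zero]
            have : (Rf (c 0)).rel (p 0) (q (1 - 1)) := by
              rw [show (1 : ℕ) - 1 = 0 from rfl, h0]; exact step
            exact this
          · simp only [if_neg (by omega : ¬ k = 0), if_neg (by omega : ¬ k + 1 = 0)]
            rw [show k + 1 - 1 = (k - 1) + 1 by omega]
            exact hq.1 (k - 1) (by omega)
        · intro k hk
          rcases Nat.eq_zero_or_pos k with hk0 | hk1
          · subst hk0
            simp only [if_pos rfl, if_neg one_ne_zero]
            rw [show (1 : ℕ) - 1 = 0 from rfl, h0]; exact h01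
          · simp only [if_neg (by omega : ¬ k = 0), if_neg (by omega : ¬ k + 1 = 0)]
            rw [show k + 1 - 1 = (k - 1) + 1 by omega]
            exact hq.2.1 (k - 1) (by omega)
        · intro k hk
          rcases Nat.eq_zero_or_pos k with hk0 | hk1
          · subst hk0
            simp only [if_pos rfl, if_neg one_ne_zero]
            rw [show (1 : ℕ) - 1 = 0 from rfl]
            exact hcc
          · simp only [if_neg (by omega : ¬ k = 0), if_neg (by omega : ¬ k + 1 = 0)]
            rw [show k + 1 - 1 = (k - 1) + 1 by omega]
            exact hq.2.2 (k - 1) (by omega)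
        · simp only [if_neg (by omega : ¬ m + 1 = 0)]
          rw [show m + 1 - 1 = m from rfl]; exact he

lemma eqvGen_walk (j₀ : J) {x y : X}
    (h : Relation.EqvGen (fun a b => ∃ i, (Rf i).rel a b) x y) :
    ∃ n c p, Wk Rf n c p ∧ p 0 = x ∧ p n = y := by
  induction h with
  | rel a b hab =>
    obtain ⟨i, hi⟩ := hab
    refine ⟨1, fun _ => i, fun k => if k = 0 then a else b, ?_, by simp, by simp⟩
    intro k hk
    have hk0 : k = 0 := by omega
    subst hk0; simpa using hi
  | refl a => exact ⟨0, fun _ => j₀, fun _ => a, fun k hk => absurd hk (by omega), rfl, rfl⟩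
  | symm a b _ ih =>
    obtain ⟨n, c, p, hw, h0, he⟩ := ih
    refine ⟨n, _, _, Wk_reverse hw, ?_, ?_⟩
    · show p (n - 0) = b
      rw [Nat.sub_zero]; exact he
    · show p (n - n) = a
      rw [Nat.sub_self]; exact h0
  | trans a b cc _ _ ih1 ih2 =>
    obtain ⟨n, c, p, hw, h0, he⟩ := ih1
    obtain ⟨m, d, q, hw', h0', he'⟩ := ih2
    refine ⟨n + m, _, _, Wk_concat hw hw' (he.trans h0'.symm), ?_, ?_⟩
    · show (if 0 < n then p 0 else q (0 - n)) = a
      by_cases hn : 0 < n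
      · rw [if_pos hn]; exact h0
      · rw [if_neg hn, show (0 : ℕ) - n = 0 from by omega, h0']
        rw [show n = 0 by omega] at he
        rw [← he, h0]
    · show (if n + m < n then p (n + m) else q (n + m - n)) = cc
      rw [if_neg (by omega), show n + m - n = m by omega]
      exact he'

end Walks

section Core

variable {X : Type} [MeasurableSpace X] {J : Type} {Rf : J → CBER X}

/-- The key tree lemma: if `y ≠ y'` are related by `Rf j` and each admits a reduced walk
not starting with index `j` to a common endpoint, we get a contradiction. -/
lemma core (hfree : FreelyIndep Rf) (N : ℕ) :
    ∀ (n m : ℕ) (c d : ℕ → J) (p q : ℕ → X) (j : J), n + m ≤ N →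
    (Rf j).rel (p 0) (q 0) → p 0 ≠ q 0 →
    RWk Rf n c p → RWk Rf m d q →
    (1 ≤ n → c 0 ≠ j) → (1 ≤ m → d 0 ≠ j) →
    p n = q m → False := by
  induction N with
  | zero =>
    intro n m c d p q j hN hrel hne hp hq hc hd hend
    have hn : n = 0 := by omega
    have hm : m = 0 := by omega
    rw [hn, hm] at hend
    exact hne hend
  | succ N ih =>
    intro n m c d p q j hN hrel hne hp hq hc hd hend
    rcases Nat.eq_zero_or_pos n with hn0 | hn1
    · rcases Nat.eq_zero_or_pos m with hm0 | hm1
      · rw [hn0, hm0] at hend; exact hne hend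
      · -- n = 0 : cycle (j-step then q), length m + 1
        refine no_cycle hfree (n := m + 1) (c := fun k => if k = 0 then j else d (k - 1))
          (p := fun k => if k = 0 then p 0 else q (k - 1)) ⟨?_, ?_, ?_⟩ (by omega) ?_
        · intro k hk
          rcases Nat.eq_zero_or_pos k with hk0 | hk1
          · subst hk0
            simp only [if_pos rfl, if_neg one_ne_zero]
            rw [show (1 : ℕ) - 1 = 0 from rfl]
            exact hrel
          · simp only [if_neg (by omega : ¬ k = 0), if_neg (by omega : ¬ k + 1 = 0)]
            rw [show k + 1 - 1 = (k - 1) + 1 by omega]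
            exact hq.1 (k - 1) (by omega)
        · intro k hk
          rcases Nat.eq_zero_or_pos k with hk0 | hk1
          · subst hk0
            simp only [if_pos rfl, if_neg one_ne_zero]
            rw [show (1 : ℕ) - 1 = 0 from rfl]
            exact hne
          · simp only [if_neg (by omega : ¬ k = 0), if_neg (by omega : ¬ k + 1 = 0)]
            rw [show k + 1 - 1 = (k - 1) + 1 by omega]
            exact hq.2.1 (k - 1) (by omega)
        · intro k hk
          rcases Nat.eq_zero_or_pos k with hk0 | hk1
          · subst hk0
            simp only [if_pos rfl, if_neg one_ne_zero]
            rw [show (1 : ℕ) - 1 = 0 from rfl]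
            exact (hd hm1).symm
          · simp only [if_neg (by omega : ¬ k = 0), if_neg (by omega : ¬ k + 1 = 0)]
            rw [show k + 1 - 1 = (k - 1) + 1 by omega]
            exact hq.2.2 (k - 1) (by omega)
        · show (if m + 1 = 0 then p 0 else q (m + 1 - 1)) = (if 0 = 0 then p 0 else q (0 - 1))
          simp only [if_neg (by omega : ¬ m + 1 = 0), if_pos rfl]
          rw [show m + 1 - 1 = m from rfl, ← hend, hn0]
          simp
    · rcases Nat.eq_zero_or_pos m with hm0 | hm1
      · -- m = 0 : cycle (reversed j-step then p), length n + 1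
        refine no_cycle hfree (n := n + 1) (c := fun k => if k = 0 then j else c (k - 1))
          (p := fun k => if k = 0 then q 0 else p (k - 1)) ⟨?_, ?_, ?_⟩ (by omega) ?_
        · intro k hk
          rcases Nat.eq_zero_or_pos k with hk0 | hk1
          · subst hk0
            simp only [if_pos rfl, if_neg one_ne_zero]
            rw [show (1 : ℕ) - 1 = 0 from rfl]
            exact (Rf j).symm hrel
          · simp only [if_neg (by omega : ¬ k = 0), if_neg (by omega : ¬ k + 1 = 0)]
            rw [show k + 1 - 1 = (k - 1) + 1 by omega]
            exact hp.1 (k - 1) (by omega)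
        · intro k hk
          rcases Nat.eq_zero_or_pos k with hk0 | hk1
          · subst hk0
            simp only [if_pos rfl, if_neg one_ne_zero]
            rw [show (1 : ℕ) - 1 = 0 from rfl]
            exact fun hh => hne hh.symm
          · simp only [if_neg (by omega : ¬ k = 0), if_neg (by omega : ¬ k + 1 = 0)]
            rw [show k + 1 - 1 = (k - 1) + 1 by omega]
            exact hp.2.1 (k - 1) (by omega)
        · intro k hk
          rcases Nat.eq_zero_or_pos k with hk0 | hk1
          · subst hk0
            simp only [if_pos rfl, if_neg one_ne_zero]
            rw [show (1 : ℕ) - 1 = 0 from rfl]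
            exact (hc hn1).symm
          · simp only [if_neg (by omega : ¬ k = 0), if_neg (by omega : ¬ k + 1 = 0)]
            rw [show k + 1 - 1 = (k - 1) + 1 by omega]
            exact hp.2.2 (k - 1) (by omega)
        · show (if n + 1 = 0 then q 0 else p (n + 1 - 1)) = (if 0 = 0 then q 0 else p (0 - 1))
          simp only [if_neg (by omega : ¬ n + 1 = 0), if_pos rfl]
          rw [show n + 1 - 1 = n from rfl, hend, hm0]
          simp
      · -- n, m ≥ 1
        have hn1' : n - 1 + 1 = n := by omega
        have hm1' : m - 1 + 1 = m := by omega
        have hsp : (Rf (c (n - 1))).rel (p (n - 1)) (p n) := by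
          have := hp.1 (n - 1) (by omega); rwa [hn1'] at this
        have hsq : (Rf (d (m - 1))).rel (q (m - 1)) (q m) := by
          have := hq.1 (m - 1) (by omega); rwa [hm1'] at this
        by_cases hcd : c (n - 1) = d (m - 1)
        · by_cases hpq : p (n - 1) = q (m - 1)
          · exact ih (n - 1) (m - 1) c d p q j (by omega) hrel hne
              (RWk_mono hp (by omega)) (RWk_mono hq (by omega))
              (fun h => hc (by omega)) (fun h => hd (by omega)) hpq
          · -- 3c : new edge between p (n-1) and q (m-1), walk through the old edge
            have hsq' : (Rf (c (n - 1))).rel (q (m - 1)) (p n) := by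
              rw [hend, hcd]; exact hsq
            have hrel2 : (Rf (c (n - 1))).rel (p (n - 1)) (q (m - 1)) :=
              (Rf _).trans hsp ((Rf _).symm hsq')
            refine ih (n + m - 1) 0
              (fun k => if k < n - 1 then c (n - 2 - k) else if k = n - 1 then j else d (k - n))
              (fun _ => j)
              (fun k => if k ≤ n - 1 then p (n - 1 - k) else q (k - n))
              (fun _ => q (m - 1)) (c (n - 1)) (by omega) ?_ ?_ ⟨?_, ?_, ?_⟩ RWk.zero ?_
              (fun h => absurd h (by omega)) ?_
            · show (Rf (c (n - 1))).rel (if 0 ≤ n - 1 then p (n - 1 - 0) else q (0 - n)) (q (m - 1))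
              rw [if_pos (by omega), Nat.sub_zero]
              exact hrel2
            · show (if 0 ≤ n - 1 then p (n - 1 - 0) else q (0 - n)) ≠ q (m - 1)
              rw [if_pos (by omega), Nat.sub_zero]
              exact hpq
            · -- steps
              intro k hk
              by_cases hk1 : k < n - 1
              · simp only [if_pos hk1, if_pos (by omega : k ≤ n - 1),
                  if_pos (by omega : k + 1 ≤ n - 1)]
                have := (Rf _).symm (hp.1 (n - 2 - k) (by omega))
                rw [show n - 2 - k + 1 = n - 1 - k by omega] at this
                rw [show n - 1 - (k + 1) = n - 2 - k by omega]
                exact this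
              · by_cases hk2 : k = n - 1
                · subst hk2
                  simp only [if_neg (by omega : ¬ n - 1 < n - 1), if_pos rfl,
                    if_pos (le_refl (n - 1)), if_neg (by omega : ¬ n - 1 + 1 ≤ n - 1)]
                  rw [Nat.sub_self, show n - 1 + 1 - n = 0 by omega]
                  exact hrel
                · simp only [if_neg (by omega : ¬ k < n - 1), if_neg hk2,
                    if_neg (by omega : ¬ k ≤ n - 1), if_neg (by omega : ¬ k + 1 ≤ n - 1)]
                  have := hq.1 (k - n) (by omega)
                  rw [show k + 1 - n = k - n + 1 by omega]
                  exact this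
            · -- distinctness
              intro k hk
              by_cases hk1 : k < n - 1
              · simp only [if_pos (by omega : k ≤ n - 1), if_pos (by omega : k + 1 ≤ n - 1)]
                have := hp.2.1 (n - 2 - k) (by omega)
                rw [show n - 2 - k + 1 = n - 1 - k by omega] at this
                rw [show n - 1 - (k + 1) = n - 2 - k by omega]
                exact fun hh => this hh.symm
              · by_cases hk2 : k = n - 1
                · subst hk2
                  simp only [if_pos (le_refl (n - 1)), if_neg (by omega : ¬ n - 1 + 1 ≤ n - 1)]
                  rw [Nat.sub_self, show n - 1 + 1 - n = 0 by omega]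
                  exact hne
                · simp only [if_neg (by omega : ¬ k ≤ n - 1), if_neg (by omega : ¬ k + 1 ≤ n - 1)]
                  have := hq.2.1 (k - n) (by omega)
                  rw [show k + 1 - n = k - n + 1 by omega]
                  exact this
            · -- index adjacency
              intro k hk
              by_cases hk1 : k + 1 < n - 1
              · simp only [if_pos (by omega : k < n - 1), if_pos hk1]
                have := hp.2.2 (n - 2 - (k + 1)) (by omega)
                rw [show n - 2 - (k + 1) + 1 = n - 2 - k by omega] at this
                exact this.symm
              · by_cases hk2 : k + 1 = n - 1
                · simp only [if_pos (by omega : k < n - 1), if_neg (by omega : ¬ k + 1 < n - 1),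
                    if_pos hk2]
                  rw [show n - 2 - k = 0 by omega]
                  exact hc hn1
                · by_cases hk3 : k = n - 1
                  · simp only [if_neg (by omega : ¬ k < n - 1), if_pos hk3,
                      if_neg (by omega : ¬ k + 1 < n - 1), if_neg (by omega : ¬ k + 1 = n - 1)]
                    rw [show k + 1 - n = 0 by omega]
                    exact (hd hm1).symm
                  · simp only [if_neg (by omega : ¬ k < n - 1), if_neg hk3,
                      if_neg (by omega : ¬ k + 1 < n - 1), if_neg (by omega : ¬ k + 1 = n - 1)]
                    have := hq.2.2 (k - n) (by omega)
                    rw [show k + 1 - n = k - n + 1 by omega]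
                    exact this
            · -- head condition
              intro hT
              show (if 0 < n - 1 then c (n - 2 - 0) else if 0 = n - 1 then j else d (0 - n))
                ≠ c (n - 1)
              rcases Nat.lt_or_ge 1 n with hn2 | hn2
              · rw [if_pos (by omega : 0 < n - 1), show n - 2 - 0 = n - 2 by omega]
                have := hp.2.2 (n - 2) (by omega)
                rw [show n - 2 + 1 = n - 1 by omega] at this
                exact this
              · rw [if_neg (by omega : ¬ (0 : ℕ) < n - 1), if_pos (by omega : 0 = n - 1)]
                rw [show n - 1 = 0 by omega] at hcd ⊢
                exact fun hh => (hc hn1) hh.symm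
            · -- endpoint
              show (if n + m - 1 ≤ n - 1 then p (n - 1 - (n + m - 1)) else q (n + m - 1 - n))
                = q (m - 1)
              rw [if_neg (by omega), show n + m - 1 - n = m - 1 by omega]
        · -- 3a : big cycle of length 1 + m + n
          refine no_cycle hfree (n := 1 + m + n)
            (c := fun k => if k = 0 then j else if k ≤ m then d (k - 1) else c (n + m - k))
            (p := fun k => if k = 0 then p 0 else if k ≤ m + 1 then q (k - 1)
              else p (n + m + 1 - k)) ⟨?_, ?_, ?_⟩ (by omega) ?_
          · -- steps
            intro k hk
            have hval : ∀ t, m + 1 ≤ t → t ≤ n + m + 1 →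
                (if t = 0 then p 0 else if t ≤ m + 1 then q (t - 1) else p (n + m + 1 - t))
                  = p (n + m + 1 - t) := by
              intro t ht1 ht2
              rcases eq_or_lt_of_le ht1 with h' | h'
              · rw [if_neg (by omega : ¬ t = 0), if_pos (by omega : t ≤ m + 1), ← h']
                rw [show m + 1 - 1 = m from rfl, show n + m + 1 - (m + 1) = n by omega]
                exact hend.symm
              · rw [if_neg (by omega : ¬ t = 0), if_neg (by omega : ¬ t ≤ m + 1)]
            rcases Nat.eq_zero_or_pos k with hk0 | hk1
            · subst hk0
              simp only [if_pos rfl, if_neg one_ne_zero, if_pos (by omega : 1 ≤ m + 1),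
                if_pos (by omega : (1:ℕ) ≤ m)]
              rw [show (1 : ℕ) - 1 = 0 from rfl]
              exact hrel
            · by_cases hk2 : k ≤ m
              · simp only [if_neg (by omega : ¬ k = 0), if_pos hk2,
                  if_neg (by omega : ¬ k + 1 = 0), if_pos (by omega : k ≤ m + 1),
                  if_pos (by omega : k + 1 ≤ m + 1)]
                rw [show k + 1 - 1 = (k - 1) + 1 by omega]
                exact hq.1 (k - 1) (by omega)
              · beta_reduce
                rw [hval k (by omega) (by omega), hval (k + 1) (by omega) (by omega)]
                simp only [if_neg (by omega : ¬ k = 0), if_neg hk2]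
                have := (Rf _).symm (hp.1 (n + m - k) (by omega))
                rw [show n + m - k + 1 = n + m + 1 - k by omega] at this
                rw [show n + m + 1 - (k + 1) = n + m - k by omega]
                exact this
          · -- distinctness
            intro k hk
            have hval : ∀ t, m + 1 ≤ t → t ≤ n + m + 1 →
                (if t = 0 then p 0 else if t ≤ m + 1 then q (t - 1) else p (n + m + 1 - t))
                  = p (n + m + 1 - t) := by
              intro t ht1 ht2
              rcases eq_or_lt_of_le ht1 with h' | h'
              · rw [if_neg (by omega : ¬ t = 0), if_pos (by omega : t ≤ m + 1), ← h']
                rw [show m + 1 - 1 = m from rfl, show n + m + 1 - (m + 1) = n by omega]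
                exact hend.symm
              · rw [if_neg (by omega : ¬ t = 0), if_neg (by omega : ¬ t ≤ m + 1)]
            rcases Nat.eq_zero_or_pos k with hk0 | hk1
            · subst hk0
              simp only [if_pos rfl, if_neg one_ne_zero, if_pos (by omega : 1 ≤ m + 1)]
              rw [show (1 : ℕ) - 1 = 0 from rfl]
              exact hne
            · by_cases hk2 : k ≤ m
              · simp only [if_neg (by omega : ¬ k = 0), if_neg (by omega : ¬ k + 1 = 0),
                  if_pos (by omega : k ≤ m + 1), if_pos (by omega : k + 1 ≤ m + 1)]
                rw [show k + 1 - 1 = (k - 1) + 1 by omega]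
                exact hq.2.1 (k - 1) (by omega)
              · beta_reduce
                rw [hval k (by omega) (by omega), hval (k + 1) (by omega) (by omega)]
                have := hp.2.1 (n + m - k) (by omega)
                rw [show n + m - k + 1 = n + m + 1 - k by omega] at this
                rw [show n + m + 1 - (k + 1) = n + m - k by omega]
                exact fun hh => this hh.symm
          · -- index adjacency
            intro k hk
            rcases Nat.eq_zero_or_pos k with hk0 | hk1
            · subst hk0
              simp only [if_pos rfl, if_neg one_ne_zero, if_pos (by omega : (1:ℕ) ≤ m)]
              rw [show (1 : ℕ) - 1 = 0 from rfl]
              exact (hd hm1).symm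
            · by_cases hk2 : k + 1 ≤ m
              · simp only [if_neg (by omega : ¬ k = 0), if_neg (by omega : ¬ k + 1 = 0),
                  if_pos (by omega : k ≤ m), if_pos hk2]
                rw [show k + 1 - 1 = (k - 1) + 1 by omega]
                exact hq.2.2 (k - 1) (by omega)
              · by_cases hk3 : k ≤ m
                · have hkm : k = m := by omega
                  simp only [if_neg (by omega : ¬ k = 0), if_neg (by omega : ¬ k + 1 = 0),
                    if_pos hk3, if_neg (by omega : ¬ k + 1 ≤ m)]
                  rw [show n + m - (k + 1) = n - 1 by omega, show k - 1 = m - 1 by omega]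
                  exact fun hh => hcd hh.symm
                · simp only [if_neg (by omega : ¬ k = 0), if_neg (by omega : ¬ k + 1 = 0),
                    if_neg hk3, if_neg (by omega : ¬ k + 1 ≤ m)]
                  have := hp.2.2 (n + m - (k + 1)) (by omega)
                  rw [show n + m - (k + 1) + 1 = n + m - k by omega] at this
                  exact this.symm
          · -- cycle closes
            show (if 1 + m + n = 0 then p 0 else if 1 + m + n ≤ m + 1 then q (1 + m + n - 1)
              else p (n + m + 1 - (1 + m + n))) = (if 0 = 0 then p 0 else _)
            rw [if_neg (by omega : ¬ 1 + m + n = 0), if_neg (by omega : ¬ 1 + m + n ≤ m + 1),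
              if_pos rfl, show n + m + 1 - (1 + m + n) = 0 by omega]

end Core

section Context

variable {X : Type} [MeasurableSpace X] {J : Type}
variable {R : CBER X} {Rf : J → CBER X} {U : J → Set X}

lemma rf_rel_R (hfp : IsFreeProduct R Rf) {i : J} {x y : X} (h : (Rf i).rel x y) :
    R.rel x y := by
  refine (hfp.2.2 x y).2 ⟨?_, Relation.EqvGen.rel x y ⟨i, h⟩⟩
  rw [hfp.2.1]
  exact Set.mem_iUnion.2 ⟨i, ((Rf i).rel_dom h).1⟩

lemma rf_dom_R (hfp : IsFreeProduct R Rf) {i : J} {x : X} (h : x ∈ (Rf i).dom) :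
    x ∈ R.dom := by
  rw [hfp.2.1]; exact Set.mem_iUnion.2 ⟨i, h⟩

lemma walk_R (hfp : IsFreeProduct R Rf) {n : ℕ} {c : ℕ → J} {p : ℕ → X}
    (hw : Wk Rf n c p) (hdom : p 0 ∈ R.dom) : R.rel (p 0) (p n) := by
  induction n with
  | zero => exact R.refl _ hdom
  | succ n ih =>
    exact R.trans (ih (fun k hk => hw k (by omega))) (rf_rel_R hfp (hw n (by omega)))

lemma R_rel_red_walk (hfp : IsFreeProduct R Rf) {x y : X} (hxy : R.rel x y) (j₀ : J) :
    ∃ n c p, RWk Rf n c p ∧ p 0 = x ∧ p n = y := by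
  obtain ⟨n, c, p, hw, h0, he⟩ := eqvGen_walk j₀ ((hfp.2.2 x y).1 hxy).2
  obtain ⟨m, d, q, hq, h0', he'⟩ := Wk_red hw
  exact ⟨m, d, q, hq, h0'.trans h0, he'.trans he⟩

lemma U_rel_self (htriv : Trivializes R Rf U) {i : J} {x : X} (hx : x ∈ U i) :
    (Rf i).rel x x :=
  (htriv.2.2.2.2.2 i x hx x hx).1 (R.refl x (htriv.2.1 i hx))

lemma U_sub_sat (htriv : Trivializes R Rf U) {i : J} : U i ⊆ (Rf i).sat (U i) :=
  fun u hu => ⟨u, hu, U_rel_self htriv hu⟩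

lemma sat_sub_dom {i : J} : (Rf i).sat (U i) ⊆ (Rf i).dom := by
  rintro y ⟨x, _, hrel⟩
  exact ((Rf i).rel_dom hrel).2

lemma sat_invariant {i : J} {y z : X} (hy : y ∈ (Rf i).sat (U i)) (hrel : (Rf i).rel y z) :
    z ∈ (Rf i).sat (U i) := by
  obtain ⟨x, hx, hxy⟩ := hy
  exact ⟨x, hx, (Rf i).trans hxy hrel⟩

/-- Part (b): for `i ≠ j`, the restriction of `Rf j` to the `Rf i`-saturation of `U i`
is trivial. -/
lemma part_b (hfp : IsFreeProduct R Rf) (htriv : Trivializes R Rf U) {i j : J} (hij : i ≠ j)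
    {x y : X} (hx : x ∈ (Rf i).sat (U i)) (hy : y ∈ (Rf i).sat (U i))
    (hxy : (Rf j).rel x y) : x = y := by
  by_contra hne
  obtain ⟨u, hu, hux⟩ := hx
  obtain ⟨v, hv, hvy⟩ := hy
  have hR : R.rel u v :=
    R.trans (rf_rel_R hfp hux) (R.trans (rf_rel_R hfp hxy) (R.symm (rf_rel_R hfp hvy)))
  have huv : (Rf i).rel u v := (htriv.2.2.2.2.2 i u hu v hv).1 hR
  have hxyi : (Rf i).rel x y :=
    (Rf i).trans ((Rf i).symm hux) ((Rf i).trans huv hvy)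
  have key : ∃ k, k + 1 < 2 ∧
      (fun k => if k = 0 then j else i) k = (fun k => if k = 0 then j else i) (k + 1) := by
    refine hfp.1 2 (fun k => if k = 1 then y else x)
      (fun k => if k = 0 then j else i) le_rfl (by norm_num) ?_ ?_
    · intro k hk
      interval_cases k
      · simpa using hne
      · simpa using Ne.symm hne
    · intro k hk
      interval_cases k
      · simpa using hxy
      · simpa using (Rf i).symm hxyi
  obtain ⟨k, hk, he⟩ := key
  have hk0 : k = 0 := by omega
  subst hk0
  simp only [if_pos rfl, if_neg one_ne_zero] at he
  exact hij he.symm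

end Context

section Gates

variable {X : Type} [MeasurableSpace X] {J : Type}
variable {R : CBER X} {Rf : J → CBER X} {U : J → Set X}

/-- `y` is a gate for index `j`: it admits a reduced walk to `⋃ i, U i` not starting
with index `j`. -/
def Gate (Rf : J → CBER X) (U : J → Set X) (j : J) (y : X) : Prop :=
  ∃ n c p, RWk Rf n c p ∧ p 0 = y ∧ p n ∈ ⋃ i, U i ∧ (1 ≤ n → c 0 ≠ j)

lemma gate_exists (hfp : IsFreeProduct R Rf) (htriv : Trivializes R Rf U) {j : J} {x : X}
    (hx : x ∈ (Rf j).dom) : ∃ y, (Rf j).rel x y ∧ Gate Rf U j y := by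
  have hxR : x ∈ R.dom := rf_dom_R hfp hx
  obtain ⟨u, hu, hxu⟩ := htriv.2.2.2.1 x hxR
  obtain ⟨n, c, p, hrw, h0, he⟩ := R_rel_red_walk hfp hxu j
  have hpn : p n ∈ ⋃ i, U i := by rw [he]; exact hu
  rcases Nat.eq_zero_or_pos n with hn | hn
  · exact ⟨x, (Rf j).refl x hx, n, c, p, hrw, h0, hpn, fun hh => absurd hh (by omega)⟩
  · by_cases hcj : c 0 = j
    · refine ⟨p 1, ?_, n - 1, fun k => c (k + 1), fun k => p (k + 1), ⟨?_, ?_, ?_⟩, rfl, ?_, ?_⟩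
      · have := hrw.1 0 hn
        rw [h0, hcj] at this
        exact this
      · intro k hk; exact hrw.1 (k + 1) (by omega)
      · intro k hk; exact hrw.2.1 (k + 1) (by omega)
      · intro k hk; exact hrw.2.2 (k + 1) (by omega)
      · show p (n - 1 + 1) ∈ ⋃ i, U i
        rw [show n - 1 + 1 = n by omega]; exact hpn
      · intro hh
        rw [← hcj]
        exact (hrw.2.2 0 (by omega)).symm
    · exact ⟨x, (Rf j).refl x hx, n, c, p, hrw, h0, hpn, fun _ => hcj⟩

lemma gate_unique (hfp : IsFreeProduct R Rf) (htriv : Trivializes R Rf U) {j : J} {y y' : X}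
    (hrel : (Rf j).rel y y') (hy'U : y' ∉ U j)
    (hg : Gate Rf U j y) (hg' : Gate Rf U j y') : y = y' := by
  by_contra hne
  obtain ⟨n, c, p, hp, hp0, hpn, hc0⟩ := hg
  obtain ⟨m, d, q, hq, hq0, hqm, hd0⟩ := hg'
  obtain ⟨a, hua⟩ := Set.mem_iUnion.1 hpn
  obtain ⟨b, hub⟩ := Set.mem_iUnion.1 hqm
  have hyR : y ∈ R.dom := rf_dom_R hfp ((Rf j).rel_dom hrel).1
  have hy'R : y' ∈ R.dom := rf_dom_R hfp ((Rf j).rel_dom hrel).2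
  have h1 : R.rel y (p n) := by
    have := walk_R hfp hp.1 (by rwa [hp0])
    rwa [hp0] at this
  have h2 : R.rel y' (q m) := by
    have := walk_R hfp hq.1 (by rwa [hq0])
    rwa [hq0] at this
  have h3 : R.rel (p n) (q m) := R.trans (R.symm h1) (R.trans (rf_rel_R hfp hrel) h2)
  have hab : a = b := htriv.2.2.2.2.1 a b (p n) hua (q m) hub h3
  have hrelu : (Rf a).rel (p n) (q m) :=
    (htriv.2.2.2.2.2 a (p n) hua (q m) (by rw [hab]; exact hub)).1 h3
  have hrel0 : (Rf j).rel (p 0) (q 0) := by rw [hp0, hq0]; exact hrel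
  have hne0 : p 0 ≠ q 0 := by rw [hp0, hq0]; exact hne
  by_cases hu : q m = p n
  · exact core hfp.1 (n + m) n m c d p q j le_rfl hrel0 hne0 hp hq hc0 hd0 hu.symm
  · rcases Nat.eq_zero_or_pos m with hm | hm
    · -- y' = q m ∈ U a
      have hy'a : y' ∈ U a := by
        rw [hab, ← hq0, show (0:ℕ) = m from hm.symm]; exact hub
      have haj : a ≠ j := fun hh => hy'U (hh ▸ hy'a)
      refine core hfp.1 (n + 1) n 1 c (fun _ => a) p
        (fun k => if k = 0 then q m else p n) j le_rfl ?_ ?_ hp ⟨?_, ?_, ?_⟩ hc0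
        (fun _ => haj) ?_
      · show (Rf j).rel (p 0) (if 0 = 0 then q m else p n)
        rw [if_pos rfl, hm]; exact hrel0
      · show p 0 ≠ (if 0 = 0 then q m else p n)
        rw [if_pos rfl, hm]; exact hne0
      · intro k hk
        have hk0 : k = 0 := by omega
        subst hk0
        simp only [if_pos rfl, if_neg one_ne_zero]
        exact (Rf a).symm hrelu
      · intro k hk
        have hk0 : k = 0 := by omega
        subst hk0
        simp only [if_pos rfl, if_neg one_ne_zero]
        exact hu
      · intro k hk; omega
      · show p n = (if 1 = 0 then q m else p n)
        rw [if_neg one_ne_zero]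
    · have hm1' : m - 1 + 1 = m := by omega
      have hsq : (Rf (d (m - 1))).rel (q (m - 1)) (q m) := by
        have := hq.1 (m - 1) (by omega); rwa [hm1'] at this
      by_cases hda : d (m - 1) = a
      · have hq2 : (Rf (d (m - 1))).rel (q (m - 1)) (p n) := by
          rw [hda]
          exact (Rf a).trans (hda ▸ hsq) ((Rf a).symm hrelu)
        by_cases hq3 : q (m - 1) = p n
        · exact core hfp.1 (n + m) n (m - 1) c d p q j (by omega) hrel0 hne0 hp
            (RWk_mono hq (by omega)) hc0 (fun h => hd0 (by omega)) hq3.symm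
        · refine core hfp.1 (n + m) n m c d p
            (fun k => if k = m then p n else q k) j le_rfl ?_ ?_ hp ⟨?_, ?_, ?_⟩ hc0 hd0 ?_
          · show (Rf j).rel (p 0) (if 0 = m then p n else q 0)
            rw [if_neg (by omega)]; exact hrel0
          · show p 0 ≠ (if 0 = m then p n else q 0)
            rw [if_neg (by omega)]; exact hne0
          · intro k hk
            by_cases hk1 : k + 1 = m
            · simp only [if_neg (by omega : ¬ k = m), if_pos hk1]
              have : k = m - 1 := by omega
              rw [this]
              exact hda ▸ hq2
            · simp only [if_neg (by omega : ¬ k = m), if_neg hk1]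
              exact hq.1 k hk
          · intro k hk
            by_cases hk1 : k + 1 = m
            · simp only [if_neg (by omega : ¬ k = m), if_pos hk1]
              have : k = m - 1 := by omega
              rw [this]
              exact hq3
            · simp only [if_neg (by omega : ¬ k = m), if_neg hk1]
              exact hq.2.1 k hk
          · exact hq.2.2
          · show p n = (if m = m then p n else q m)
            rw [if_pos rfl]
      · refine core hfp.1 (n + m + 1) n (m + 1) c (fun k => if k < m then d k else a) p
          (fun k => if k ≤ m then q k else p n) j (by omega) ?_ ?_ hp ⟨?_, ?_, ?_⟩ hc0 ?_ ?_
        · show (Rf j).rel (p 0) (if 0 ≤ m then q 0 else p n)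
          rw [if_pos (by omega)]; exact hrel0
        · show p 0 ≠ (if 0 ≤ m then q 0 else p n)
          rw [if_pos (by omega)]; exact hne0
        · intro k hk
          by_cases hk1 : k < m
          · simp only [if_pos hk1, if_pos (by omega : k ≤ m), if_pos (by omega : k + 1 ≤ m)]
            exact hq.1 k hk1
          · have hkm : k = m := by omega
            simp only [if_neg hk1, if_pos (by omega : k ≤ m), if_neg (by omega : ¬ k + 1 ≤ m)]
            rw [hkm]
            exact (Rf a).symm hrelu
        · intro k hk
          by_cases hk1 : k < m
          · simp only [if_pos (by omega : k ≤ m), if_pos (by omega : k + 1 ≤ m)]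
            exact hq.2.1 k hk1
          · have hkm : k = m := by omega
            simp only [if_pos (by omega : k ≤ m), if_neg (by omega : ¬ k + 1 ≤ m)]
            rw [hkm]
            exact hu
        · intro k hk
          by_cases hk1 : k + 1 < m
          · simp only [if_pos (by omega : k < m), if_pos hk1]
            exact hq.2.2 k hk1
          · have hkm : k + 1 = m := by omega
            simp only [if_pos (by omega : k < m), if_neg (by omega : ¬ k + 1 < m)]
            rw [show k = m - 1 by omega]
            exact hda
        · intro _
          show (if 0 < m then d 0 else a) ≠ j
          rw [if_pos hm]
          exact hd0 hm
        · show p n = (if m + 1 ≤ m then q (m + 1) else p n)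
          rw [if_neg (by omega)]

end Gates

section SatMeas

variable {X : Type} [MeasurableSpace X] {J : Type}
variable {R : CBER X} {Rf : J → CBER X} {U : J → Set X}

lemma analyticSet_union' {α : Type} [TopologicalSpace α] {s t : Set α}
    (hs : MeasureTheory.AnalyticSet s) (ht : MeasureTheory.AnalyticSet t) :
    MeasureTheory.AnalyticSet (s ∪ t) := by
  rw [Set.union_eq_iUnion]
  exact MeasureTheory.AnalyticSet.iUnion (fun b => by cases b <;> simpa)

lemma analyticSet_inter' {α : Type} [TopologicalSpace α] [T2Space α] {s t : Set α}
    (hs : MeasureTheory.AnalyticSet s) (ht : MeasureTheory.AnalyticSet t) :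
    MeasureTheory.AnalyticSet (s ∩ t) := by
  rw [Set.inter_eq_iInter]
  exact MeasureTheory.AnalyticSet.iInter (fun b => by cases b <;> simpa)

lemma sat_compl_eq (hfp : IsFreeProduct R Rf) (htriv : Trivializes R Rf U) (j : J) :
    ((Rf j).sat (U j))ᶜ = R.domᶜ ∪ Prod.snd '' {pr : X × X |
      R.rel pr.2 pr.1 ∧ ((∃ i, i ≠ j ∧ pr.1 ∈ U i) ∨ (pr.1 ∈ U j ∧ ¬ (Rf j).rel pr.1 pr.2))} := by
  ext y
  simp only [Set.mem_compl_iff, Set.mem_union, Set.mem_image, Set.mem_setOf_eq]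
  constructor
  · intro hy
    by_cases hdom : y ∈ R.dom
    · obtain ⟨u, hu, hyu⟩ := htriv.2.2.2.1 y hdom
      obtain ⟨i, hui⟩ := Set.mem_iUnion.1 hu
      refine Or.inr ⟨(u, y), ⟨hyu, ?_⟩, rfl⟩
      by_cases hij : i = j
      · subst hij
        exact Or.inr ⟨hui, fun hrel => hy ⟨u, hui, hrel⟩⟩
      · exact Or.inl ⟨i, hij, hui⟩
    · exact Or.inl hdom
  · rintro (hdom | ⟨⟨u, y'⟩, ⟨hr, hdisj⟩, rfl⟩) hy
    · exact hdom (rf_dom_R hfp (sat_sub_dom hy))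
    · obtain ⟨v, hv, hvy⟩ := hy
      rcases hdisj with ⟨i, hij, hui⟩ | ⟨huj, hnrel⟩
      · have : R.rel v u := R.trans (rf_rel_R hfp hvy) hr
        exact hij (htriv.2.2.2.2.1 i j u hui v hv (R.symm this))
      · have huv : R.rel u v := R.trans (R.symm hr) (R.symm (rf_rel_R hfp hvy))
        have := (htriv.2.2.2.2.2 j u huj v hv).1 huv
        exact hnrel ((Rf j).trans this hvy)

lemma sat_meas [StandardBorelSpace X] [Countable J] (hfp : IsFreeProduct R Rf)
    (htriv : Trivializes R Rf U) (j : J) : MeasurableSet ((Rf j).sat (U j)) := by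
  letI := upgradeStandardBorel X
  apply MeasureTheory.AnalyticSet.measurableSet_of_compl
  · have heq : (Rf j).sat (U j)
        = Prod.snd '' {pr : X × X | pr.1 ∈ U j ∧ (Rf j).rel pr.1 pr.2} := by
      ext y
      simp only [CBER.sat, Set.mem_setOf_eq, Set.mem_image]
      constructor
      · rintro ⟨x, hx, hrel⟩; exact ⟨(x, y), ⟨hx, hrel⟩, rfl⟩
      · rintro ⟨⟨x, y'⟩, ⟨hx, hrel⟩, rfl⟩; exact ⟨x, hx, hrel⟩
    rw [heq]
    have hB : MeasurableSet {pr : X × X | pr.1 ∈ U j ∧ (Rf j).rel pr.1 pr.2} :=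
      (measurable_fst (htriv.1 j)).inter (Rf j).rel_meas
    exact hB.analyticSet_image measurable_snd
  · rw [sat_compl_eq hfp htriv j]
    apply analyticSet_union'
    · exact R.dom_meas.compl.analyticSet
    · have hB : MeasurableSet {pr : X × X |
          R.rel pr.2 pr.1 ∧ ((∃ i, i ≠ j ∧ pr.1 ∈ U i) ∨ (pr.1 ∈ U j ∧ ¬ (Rf j).rel pr.1 pr.2))} := by
        have h1 : MeasurableSet {pr : X × X | R.rel pr.2 pr.1} := measurable_swap R.rel_meas
        have h2 : MeasurableSet {pr : X × X | ∃ i, i ≠ j ∧ pr.1 ∈ U i} := by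
          have heq2 : {pr : X × X | ∃ i, i ≠ j ∧ pr.1 ∈ U i}
              = Prod.fst ⁻¹' (⋃ i, {x | i ≠ j ∧ x ∈ U i}) := by
            ext pr; simp [Set.mem_iUnion]
          rw [heq2]
          apply measurable_fst
          apply MeasurableSet.iUnion
          intro i
          by_cases hij : i = j
          · simp [hij]
          · have : {x | i ≠ j ∧ x ∈ U i} = U i := by ext x; simp [hij]
            rw [this]; exact htriv.1 i
        have h3 : MeasurableSet {pr : X × X | pr.1 ∈ U j ∧ ¬ (Rf j).rel pr.1 pr.2} :=
          (measurable_fst (htriv.1 j)).inter (Rf j).rel_meas.compl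
        exact h1.inter (h2.union h3)
      exact hB.analyticSet_image measurable_snd

/-- Part (a): the saturations also trivialize the decomposition. -/
lemma part_a (hfp : IsFreeProduct R Rf) (htriv : Trivializes R Rf U)
    (hmeas : ∀ j, MeasurableSet ((Rf j).sat (U j))) :
    Trivializes R Rf (fun j => (Rf j).sat (U j)) := by
  refine ⟨hmeas, ?_, ?_, ?_, ?_, ?_⟩
  · exact fun j y hy => rf_dom_R hfp (sat_sub_dom hy)
  · intro i j hij
    simp only [Function.onFun]
    rw [Set.disjoint_left]
    intro x hxi hxj
    obtain ⟨u, hu, hux⟩ := hxi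
    obtain ⟨v, hv, hvx⟩ := hxj
    have : R.rel u v := R.trans (rf_rel_R hfp hux) (R.symm (rf_rel_R hfp hvx))
    exact hij (htriv.2.2.2.2.1 i j u hu v hv this)
  · intro x hx
    obtain ⟨y, hy, hr⟩ := htriv.2.2.2.1 x hx
    obtain ⟨i, hyi⟩ := Set.mem_iUnion.1 hy
    exact ⟨y, Set.mem_iUnion.2 ⟨i, U_sub_sat htriv hyi⟩, hr⟩
  · intro i j x hx y hy hr
    obtain ⟨u, hu, hux⟩ := hx
    obtain ⟨v, hv, hvy⟩ := hy
    have : R.rel u v :=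
      R.trans (rf_rel_R hfp hux) (R.trans hr (R.symm (rf_rel_R hfp hvy)))
    exact htriv.2.2.2.2.1 i j u hu v hv this
  · intro j x hx y hy
    constructor
    · intro hr
      obtain ⟨u, hu, hux⟩ := hx
      obtain ⟨v, hv, hvy⟩ := hy
      have : R.rel u v :=
        R.trans (rf_rel_R hfp hux) (R.trans hr (R.symm (rf_rel_R hfp hvy)))
      have huv := (htriv.2.2.2.2.2 j u hu v hv).1 this
      exact (Rf j).trans ((Rf j).symm hux) ((Rf j).trans huv hvy)
    · exact rf_rel_R hfp

end SatMeas

section WordSets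

variable {X : Type} [MeasurableSpace X] {J : Type}
variable {R : CBER X} {Rf : J → CBER X} {U : J → Set X}

variable (Rf U) in
/-- The Borel set of tuples realizing a reduced-word walk with indices `c` into `⋃ i, U i`. -/
def tupleSetB (n : ℕ) (c : ℕ → J) : Set (Fin (n + 1) → X) :=
  {f | (∀ k : Fin n,
        (Rf (c k.1)).rel (f ⟨k.1, Nat.lt_succ_of_lt k.2⟩) (f ⟨k.1 + 1, Nat.succ_lt_succ k.2⟩) ∧
        f ⟨k.1, Nat.lt_succ_of_lt k.2⟩ ≠ f ⟨k.1 + 1, Nat.succ_lt_succ k.2⟩) ∧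
      f ⟨n, Nat.lt_succ_self n⟩ ∈ ⋃ i, U i}

variable (Rf U) in
/-- The (analytic) set of starting points of such walks. -/
def tupleSet (n : ℕ) (c : ℕ → J) : Set X :=
  (fun f : Fin (n + 1) → X => f ⟨0, Nat.succ_pos n⟩) '' tupleSetB Rf U n c

lemma measurableSet_ne_apply [StandardBorelSpace X] {Z : Type} [MeasurableSpace Z]
    {g h : Z → X} (hg : Measurable g) (hh : Measurable h) :
    MeasurableSet {z | g z ≠ h z} := by
  letI := upgradeStandardBorel X
  have hd : MeasurableSet (Set.diagonal X) := isClosed_diagonal.measurableSet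
  have : {z | g z ≠ h z} = (fun z => (g z, h z)) ⁻¹' (Set.diagonal X)ᶜ := by
    ext z; simp [Set.diagonal]
  rw [this]
  exact (hg.prodMk hh) hd.compl

lemma tupleSetB_meas [StandardBorelSpace X] [Countable J]
    (hU : ∀ i, MeasurableSet (U i)) (n : ℕ) (c : ℕ → J) :
    MeasurableSet (tupleSetB Rf U n c) := by
  have heq : tupleSetB Rf U n c =
      (⋂ k : Fin n,
        ({f : Fin (n + 1) → X |
          (Rf (c k.1)).rel (f ⟨k.1, Nat.lt_succ_of_lt k.2⟩) (f ⟨k.1 + 1, Nat.succ_lt_succ k.2⟩)} ∩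
         {f : Fin (n + 1) → X |
          f ⟨k.1, Nat.lt_succ_of_lt k.2⟩ ≠ f ⟨k.1 + 1, Nat.succ_lt_succ k.2⟩})) ∩
      {f : Fin (n + 1) → X | f ⟨n, Nat.lt_succ_self n⟩ ∈ ⋃ i, U i} := by
    ext f
    simp only [tupleSetB, Set.mem_setOf_eq, Set.mem_inter_iff, Set.mem_iInter]
  rw [heq]
  apply MeasurableSet.inter
  · apply MeasurableSet.iInter
    intro k
    apply MeasurableSet.inter
    · have hm : Measurable (fun f : Fin (n + 1) → X =>
          (f ⟨k.1, Nat.lt_succ_of_lt k.2⟩, f ⟨k.1 + 1, Nat.succ_lt_succ k.2⟩)) :=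
        (measurable_pi_apply _).prodMk (measurable_pi_apply _)
      exact hm (Rf (c k.1)).rel_meas
    · exact measurableSet_ne_apply (measurable_pi_apply _) (measurable_pi_apply _)
  · exact measurable_pi_apply _ (MeasurableSet.iUnion hU)

lemma mem_tupleSet {n : ℕ} {c : ℕ → J} {y : X} :
    y ∈ tupleSet Rf U n c ↔ ∃ p : ℕ → X, p 0 = y ∧
      (∀ k, k < n → (Rf (c k)).rel (p k) (p (k + 1)) ∧ p k ≠ p (k + 1)) ∧
      p n ∈ ⋃ i, U i := by
  constructor
  · rintro ⟨f, ⟨hf1, hf2⟩, rfl⟩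
    refine ⟨fun k => if h : k < n + 1 then f ⟨k, h⟩ else f ⟨0, Nat.succ_pos n⟩, ?_, ?_, ?_⟩
    · beta_reduce
      rw [dif_pos (Nat.succ_pos n)]
    · intro k hk
      beta_reduce
      rw [dif_pos (by omega : k < n + 1), dif_pos (by omega : k + 1 < n + 1)]
      exact hf1 ⟨k, hk⟩
    · beta_reduce
      rw [dif_pos (Nat.lt_succ_self n)]
      exact hf2
  · rintro ⟨p, h0, hsteps, hend⟩
    exact ⟨fun k : Fin (n + 1) => p k.1, ⟨fun k => hsteps k.1 k.2, hend⟩, h0⟩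

/-- Totalization of a finite word. -/
def cword (j : J) (w : Σ n : ℕ, Fin n → J) : ℕ → J :=
  fun k => if h : k < w.1 then w.2 ⟨k, h⟩ else j

variable (Rf U) in
/-- Starting points of reduced walks into `⋃ i, U i` not starting with `j` (length ≥ 1). -/
def GSpos (j : J) : Set X :=
  (⋃ i, U i) ∪
  ⋃ (w : {w : Σ n : ℕ, Fin n → J //
      (∀ k, k + 1 < w.1 → cword j w k ≠ cword j w (k + 1)) ∧ 0 < w.1 ∧ cword j w 0 ≠ j}),
    tupleSet Rf U w.1.1 (cword j w.1)

variable (Rf U) in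
/-- Starting points of reduced walks into `⋃ i, U i` starting with `j`. -/
def GSneg (j : J) : Set X :=
  ⋃ (w : {w : Σ n : ℕ, Fin n → J //
      (∀ k, k + 1 < w.1 → cword j w k ≠ cword j w (k + 1)) ∧ 0 < w.1 ∧ cword j w 0 = j}),
    tupleSet Rf U w.1.1 (cword j w.1)

lemma cword_eq {j : J} {n : ℕ} (c : ℕ → J) {k : ℕ} (hk : k < n) :
    cword j ⟨n, fun t : Fin n => c t.1⟩ k = c k := by
  simp only [cword, dif_pos hk]

lemma mem_GSpos {j : J} {y : X} :
    y ∈ GSpos Rf U j ↔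
      ((y ∈ ⋃ i, U i) ∨ ∃ n c p, RWk Rf n c p ∧ p 0 = y ∧ p n ∈ (⋃ i, U i) ∧ 0 < n ∧ c 0 ≠ j) := by
  constructor
  · rintro (hy | hy)
    · exact Or.inl hy
    · obtain ⟨⟨w, hok, hpos, hhd⟩, hmem⟩ := Set.mem_iUnion.1 hy
      obtain ⟨p, h0, hsteps, hend⟩ := mem_tupleSet.1 hmem
      exact Or.inr ⟨w.1, cword j w, p,
        ⟨fun k hk => (hsteps k hk).1, fun k hk => (hsteps k hk).2, hok⟩, h0, hend, hpos, hhd⟩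
  · rintro (hy | ⟨n, c, p, hrw, h0, hend, hn, hc0⟩)
    · exact Or.inl hy
    · refine Or.inr (Set.mem_iUnion.2 ⟨⟨⟨n, fun t : Fin n => c t.1⟩, ?_, ?_, ?_⟩, ?_⟩)
      · intro k hk
        have hk' : k + 1 < n := hk
        rw [cword_eq c (by omega : k < n), cword_eq c hk']
        exact hrw.2.2 k hk'
      · exact hn
      · rw [cword_eq c hn]; exact hc0
      · refine mem_tupleSet.2 ⟨p, h0, ?_, hend⟩
        intro k hk
        have hk' : k < n := hk
        rw [cword_eq c hk']
        exact ⟨hrw.1 k hk', hrw.2.1 k hk'⟩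

lemma mem_GSneg {j : J} {y : X} :
    y ∈ GSneg Rf U j ↔
      ∃ n c p, RWk Rf n c p ∧ p 0 = y ∧ p n ∈ (⋃ i, U i) ∧ 0 < n ∧ c 0 = j := by
  constructor
  · intro hy
    obtain ⟨⟨w, hok, hpos, hhd⟩, hmem⟩ := Set.mem_iUnion.1 hy
    obtain ⟨p, h0, hsteps, hend⟩ := mem_tupleSet.1 hmem
    exact ⟨w.1, cword j w, p,
      ⟨fun k hk => (hsteps k hk).1, fun k hk => (hsteps k hk).2, hok⟩, h0, hend, hpos, hhd⟩
  · rintro ⟨n, c, p, hrw, h0, hend, hn, hc0⟩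
    refine Set.mem_iUnion.2 ⟨⟨⟨n, fun t : Fin n => c t.1⟩, ?_, ?_, ?_⟩, ?_⟩
    · intro k hk
      have hk' : k + 1 < n := hk
      rw [cword_eq c (by omega : k < n), cword_eq c hk']
      exact hrw.2.2 k hk'
    · exact hn
    · rw [cword_eq c hn]; exact hc0
    · refine mem_tupleSet.2 ⟨p, h0, ?_, hend⟩
      intro k hk
      have hk' : k < n := hk
      rw [cword_eq c hk']
      exact ⟨hrw.1 k hk', hrw.2.1 k hk'⟩

lemma GSpos_iff_gate {j : J} {y : X} : y ∈ GSpos Rf U j ↔ Gate Rf U j y := by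
  rw [mem_GSpos]
  constructor
  · rintro (hy | ⟨n, c, p, hrw, h0, hend, hn, hc0⟩)
    · exact ⟨0, fun _ => j, fun _ => y, RWk.zero, rfl, hy, fun h => absurd h (by omega)⟩
    · exact ⟨n, c, p, hrw, h0, hend, fun _ => hc0⟩
  · rintro ⟨n, c, p, hrw, h0, hend, hc0⟩
    rcases Nat.eq_zero_or_pos n with hn | hn
    · left
      rw [← h0, show (0 : ℕ) = n from hn.symm]
      exact hend
    · exact Or.inr ⟨n, c, p, hrw, h0, hend, hn, hc0 hn⟩

end WordSets

section Final

variable {X : Type} [MeasurableSpace X] {J : Type}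
variable {R : CBER X} {Rf : J → CBER X} {U : J → Set X}

lemma gate_total (hfp : IsFreeProduct R Rf) (htriv : Trivializes R Rf U) (j : J) {y : X}
    (hy : y ∈ R.dom) : Gate Rf U j y ∨ y ∈ GSneg Rf U j := by
  obtain ⟨u, hu, hyu⟩ := htriv.2.2.2.1 y hy
  obtain ⟨n, c, p, hrw, h0, he⟩ := R_rel_red_walk hfp hyu j
  have hpn : p n ∈ ⋃ i, U i := by rw [he]; exact hu
  rcases Nat.eq_zero_or_pos n with hn | hn
  · exact Or.inl ⟨n, c, p, hrw, h0, hpn, fun h => absurd h (by omega)⟩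
  · by_cases hcj : c 0 = j
    · exact Or.inr (mem_GSneg.2 ⟨n, c, p, hrw, h0, hpn, hn, hcj⟩)
    · exact Or.inl ⟨n, c, p, hrw, h0, hpn, fun _ => hcj⟩

lemma gate_neg_excl (hfp : IsFreeProduct R Rf) (htriv : Trivializes R Rf U) {j : J} {y : X}
    (hsat : y ∉ (Rf j).sat (U j)) (hgate : Gate Rf U j y) (hneg : y ∈ GSneg Rf U j) :
    False := by
  obtain ⟨n, c, p, hrw, h0, hpn, hn, hc0⟩ := mem_GSneg.1 hneg
  have hrel1 : (Rf j).rel y (p 1) := by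
    have := hrw.1 0 hn; rw [h0, hc0] at this; exact this
  have hne1 : y ≠ p 1 := by
    have := hrw.2.1 0 hn; rw [h0] at this; exact this
  have hgate1 : Gate Rf U j (p 1) := by
    refine ⟨n - 1, fun k => c (k + 1), fun k => p (k + 1),
      ⟨fun k hk => hrw.1 (k + 1) (by omega), fun k hk => hrw.2.1 (k + 1) (by omega),
       fun k hk => hrw.2.2 (k + 1) (by omega)⟩, rfl, ?_, ?_⟩
    · show p (n - 1 + 1) ∈ _
      rw [show n - 1 + 1 = n by omega]; exact hpn
    · intro hh
      rw [← hc0]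
      exact (hrw.2.2 0 (by omega)).symm
  have hp1Uj : p 1 ∉ U j := fun hh => hsat ⟨p 1, hh, (Rf j).symm hrel1⟩
  exact hne1 (gate_unique hfp htriv hrel1 hp1Uj hgate hgate1)

lemma part_c [StandardBorelSpace X] [Countable J] (hfp : IsFreeProduct R Rf)
    (htriv : Trivializes R Rf U) (j : J) :
    (Rf j).SmoothOn (((Rf j).sat (U j))ᶜ) := by
  classical
  set E : Set X := (Rf j).dom ∩ ((Rf j).sat (U j))ᶜ with hE
  have hEmeas : MeasurableSet E := (Rf j).dom_meas.inter (sat_meas hfp htriv j).compl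
  set D : Set X := E ∩ GSpos Rf U j with hD
  have hUall : MeasurableSet (⋃ i, U i) := MeasurableSet.iUnion htriv.1
  have hcomp : Dᶜ = Eᶜ ∪ ((E ∩ (⋃ i, U i)ᶜ) ∩ GSneg Rf U j) := by
    ext y
    simp only [hD, Set.mem_compl_iff, Set.mem_union, Set.mem_inter_iff]
    constructor
    · intro hy
      by_cases hyE : y ∈ E
      · right
        have hynotgate : ¬ Gate Rf U j y := fun hg => hy ⟨hyE, GSpos_iff_gate.2 hg⟩
        have hyU : y ∉ ⋃ i, U i := fun hh =>
          hynotgate ⟨0, fun _ => j, fun _ => y, RWk.zero, rfl, hh, fun h => absurd h (by omega)⟩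
        have hyR : y ∈ R.dom := rf_dom_R hfp hyE.1
        rcases gate_total hfp htriv j hyR with hg | hneg
        · exact absurd hg hynotgate
        · exact ⟨⟨hyE, hyU⟩, hneg⟩
      · exact Or.inl hyE
    · rintro (hyE | ⟨⟨hyE, _⟩, hneg⟩) hyD
      · exact hyE hyD.1
      · exact gate_neg_excl hfp htriv hyE.2 (GSpos_iff_gate.1 hyD.2) hneg
  have hDmeas : MeasurableSet D := by
    letI := upgradeStandardBorel X
    have htuple : ∀ (n : ℕ) (c : ℕ → J), MeasureTheory.AnalyticSet (tupleSet Rf U n c) :=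
      fun n c => (tupleSetB_meas htriv.1 n c).analyticSet_image (measurable_pi_apply _)
    have hGSpos : MeasureTheory.AnalyticSet (GSpos Rf U j) :=
      analyticSet_union' hUall.analyticSet
        (MeasureTheory.AnalyticSet.iUnion (fun w => htuple _ _))
    have hGSneg : MeasureTheory.AnalyticSet (GSneg Rf U j) :=
      MeasureTheory.AnalyticSet.iUnion (fun w => htuple _ _)
    apply MeasureTheory.AnalyticSet.measurableSet_of_compl
    · exact analyticSet_inter' hEmeas.analyticSet hGSpos
    · rw [hcomp]
      exact analyticSet_union' hEmeas.compl.analyticSet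
        (analyticSet_inter' (analyticSet_inter' hEmeas.analyticSet hUall.compl.analyticSet)
          hGSneg)
  refine ⟨D, hDmeas, fun y hy => hy.1.2, ?_⟩
  intro x hx
  obtain ⟨y, hrel, hgate⟩ := gate_exists hfp htriv hx.1
  have hydom : y ∈ (Rf j).dom := ((Rf j).rel_dom hrel).2
  have hysat : y ∉ (Rf j).sat (U j) := fun hh => hx.2 (sat_invariant hh ((Rf j).symm hrel))
  refine ⟨y, ⟨⟨⟨hydom, hysat⟩, GSpos_iff_gate.2 hgate⟩, hrel⟩, ?_⟩
  rintro z ⟨⟨⟨hzdom, hzsat⟩, hzpos⟩, hrelz⟩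
  have hrelzy : (Rf j).rel z y := (Rf j).trans ((Rf j).symm hrelz) hrel
  have hyUj : y ∉ U j := fun hh => hysat ⟨y, hh, (Rf j).refl y hydom⟩
  exact gate_unique hfp htriv hrelzy hyUj (GSpos_iff_gate.1 hzpos) hgate

end Final


/-- If the free product decomposition `R = *ⱼ Rⱼ` is trivialized by
`U = ⊔ⱼ Uⱼ`, then (a) the `Rⱼ`-saturations `Ūⱼ = Rⱼ Uⱼ` also trivialize it, (b) for
`i ≠ j` the restriction of `Rⱼ` to `Ūᵢ` is trivial, and (c) `Rⱼ` restricted to the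
complement of `Ūⱼ` is smooth. -/
theorem trivializing_partition_saturations
    {X : Type} [MeasurableSpace X] [StandardBorelSpace X]
    {J : Type} [Countable J]
    (R : CBER X) (Rf : J → CBER X)
    (hfp : IsFreeProduct R Rf)
    (U : J → Set X) (htriv : Trivializes R Rf U) :
    Trivializes R Rf (fun j => (Rf j).sat (U j)) ∧
    (∀ i j : J, i ≠ j →
      ∀ x ∈ (Rf i).sat (U i), ∀ y ∈ (Rf i).sat (U i), (Rf j).rel x y → x = y) ∧
    (∀ j : J, (Rf j).SmoothOn (((Rf j).sat (U j))ᶜ)) :=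
  ⟨part_a hfp htriv (sat_meas hfp htriv),
   fun _ _ hij _ hx _ hy hxy => part_b hfp htriv hij hx hy hxy,
   fun j => part_c hfp htriv j⟩
end
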